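/- arXiv:1703.06131 — 6 statements merged into one kernel-verified Lean document; each statement's English description precedes it below -/
import Mathlib

section
/- Let G be a simple graph on the vertex set {1,…,n}. Define the marginal graphs Gⁿ,…,G¹ by Gⁿ = G and, for each k ≤ n, G^{k−1} is obtained from G^k by deleting vertex k and adding all edges between distinct vertices of Nb(k, G^k). Let Î_S be the set of pairs (j,k) with j < k and j ∉ Nb(k, G^k), and let Î_T be defined recursively over k = 2,…,n as the set of pairs (j,k) with j < k such that (j,i) ∈ Î_T for every i ∈ Nb(k, G^k). Then Î_T ⊆ Î_S. -/
/-- Eliminate the vertex `k` from the graph `G`: delete all edges incident to `k`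
and turn the neighborhood of `k` into a clique. -/
def elimVertex {n : ℕ} (G : SimpleGraph (Fin n)) (k : Fin n) : SimpleGraph (Fin n) where
  Adj i j := i ≠ j ∧ i ≠ k ∧ j ≠ k ∧ (G.Adj i j ∨ (G.Adj k i ∧ G.Adj k j))
  symm := by
    constructor
    rintro i j ⟨h1, h2, h3, h4⟩
    refine ⟨h1.symm, h3, h2, ?_⟩
    rcases h4 with h | ⟨ha, hb⟩
    · exact Or.inl h.symm
    · exact Or.inr ⟨hb, ha⟩
  loopless := by constructor; rintro i ⟨h, -⟩; exact h rfl

/-- The sequence of marginal graphs: `margSeq hn G m` is the graph obtained from `G`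
after eliminating in order the (0-indexed) vertices `n-1, n-2, …, n-m`.
In the 1-indexed notation of the paper, `margSeq hn G (n-k)` is `G^k`, so that the graph
`G^k` used for vertex `k` (0-indexed vertex `k-1`) is `margSeq hn G (n-1-(k-1))`. -/
def margSeq {n : ℕ} (hn : 0 < n) (G : SimpleGraph (Fin n)) : ℕ → SimpleGraph (Fin n)
  | 0 => G
  | (m + 1) => elimVertex (margSeq hn G m) ⟨n - 1 - m, by omega⟩

/-- Given the neighborhoods `Nb k = Nb(k, G^k)` of the marginal graphs, the predicted sparsity
pattern `Î_T` of the direct transport is defined recursively: `(j,k) ∈ Î_T` iff `j < k` and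
`(j,i) ∈ Î_T` for every `i ∈ Nb k`.  (Since `Nb(k, G^k) ⊆ {1,…,k-1}` this recursion is
well-founded, and the inductive predicate below is its unique solution.) -/
inductive IhatT {n : ℕ} (Nb : Fin n → Set (Fin n)) : Fin n → Fin n → Prop where
  | mk {j k : Fin n} (hjk : j < k) (h : ∀ i ∈ Nb k, IhatT Nb j i) : IhatT Nb j k

namespace IhatT

variable {n : ℕ} {Nb : Fin n → Set (Fin n)} {j k : Fin n}

theorem lt (h : IhatT Nb j k) : j < k := by
  cases h with
  | mk hjk _ => exact hjk

theorem irrefl (j : Fin n) : ¬IhatT Nb j j :=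
  fun h => lt_irrefl j h.lt

theorem notMem (h : IhatT Nb j k) : j ∉ Nb k := by
  cases h with
  | mk _ hNb => exact fun hj => irrefl j (hNb j hj)

end IhatT

/-- **The predicted sparsity pattern of the direct transport is contained in that of the
inverse transport:** `Î_T ⊆ Î_S`, where `Î_S = {(j,k) : j < k, j ∉ Nb(k, G^k)}`. -/
theorem IhatT_subset_IhatS
    (n : ℕ) (hn : 0 < n) (G : SimpleGraph (Fin n)) (j k : Fin n)
    (h : IhatT (fun k => (margSeq hn G (n - 1 - (k : ℕ))).neighborSet k) j k) :
    j < k ∧ j ∉ (margSeq hn G (n - 1 - (k : ℕ))).neighborSet k :=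
  ⟨h.lt, h.notMem⟩
end

section
/- Let G be a simple graph on a finite vertex set V, and let A ⊆ V be a set of vertices such that no edge of G is incident to any vertex of A. For S' ⊆ V, let G[S'] denote the graph obtained from G by adding all edges between distinct vertices of S'. Then the following are equivalent: (i) V ∖ A is not a clique of G; (ii) there exists a partition (A', S', B') of V with A ⊊ A' and B' nonempty such that, in the graph G[S'], every walk from a vertex of A' to a vertex of B' passes through a vertex of S' (i.e., S' separates A' from B' in G[S']). -/
/-- The graph obtained from `G` by adding all edges between distinct vertices of `S'`
(turning `S'` into a clique). -/
def withClique {V : Type*} (G : SimpleGraph V) (S' : Set V) : SimpleGraph V where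
  Adj i j := i ≠ j ∧ (G.Adj i j ∨ (i ∈ S' ∧ j ∈ S'))
  symm := by
    constructor
    rintro i j ⟨h1, h2⟩
    refine ⟨h1.symm, ?_⟩
    rcases h2 with h | ⟨ha, hb⟩
    · exact Or.inl h.symm
    · exact Or.inr ⟨hb, ha⟩
  loopless := by constructor; rintro i ⟨h, -⟩; exact h rfl

/-- `S` separates `A` from `B` in `G`: every walk from a vertex of `A` to a vertex of `B`
meets `S`. -/
def Separates {V : Type*} (G : SimpleGraph V) (A B S : Set V) : Prop :=
  ∀ a ∈ A, ∀ b ∈ B, ∀ w : G.Walk a b, ∃ v ∈ S, v ∈ w.support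

section

variable {V : Type*}

lemma withClique_adj_of_notMem {G : SimpleGraph V} {S : Set V} {u v : V}
    (hu : u ∉ S) (h : (withClique G S).Adj u v) : G.Adj u v :=
  h.2.resolve_right fun h => hu h.1

lemma le_withClique (G : SimpleGraph V) (S : Set V) : G ≤ withClique G S :=
  fun _ _ h => ⟨h.ne, Or.inl h⟩

lemma separates_of_adj_mem {H : SimpleGraph V} {A B S : Set V}
    (hAB : Disjoint A B) (hadj : ∀ u ∈ A, u ∉ S → ∀ v, H.Adj u v → v ∈ A ∪ S) :
    Separates H A B S := by
  intro a ha b hb w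
  induction w with
  | nil => exact absurd hb (hAB.notMem_of_mem_left ha)
  | @cons u v _ huv p ih =>
    by_cases huS : u ∈ S
    · exact ⟨u, huS, p.cons huv |>.start_mem_support⟩
    rcases hadj u ha huS v huv with hvA | hvS
    · obtain ⟨s, hs, hsp⟩ := ih hvA hb
      exact ⟨s, hs, List.mem_cons_of_mem u hsp⟩
    · exact ⟨v, hvS, List.mem_cons_of_mem u p.start_mem_support⟩

lemma Separates.not_adj {H : SimpleGraph V} {A B S : Set V}
    (hsep : Separates H A B S) (hAS : Disjoint A S) (hSB : Disjoint S B)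
    {a b : V} (ha : a ∈ A) (hb : b ∈ B) : ¬ H.Adj a b := fun hab => by
  obtain ⟨v, hvS, hv⟩ := hsep a ha b hb hab.toWalk
  rcases List.mem_pair.mp hv with rfl | rfl
  · exact hAS.notMem_of_mem_left ha hvS
  · exact hSB.notMem_of_mem_left hvS hb

/-- Take `A' = A ∪ {x}`, `B' = {y}` and `S'` the rest: every edge at `A'` is an edge at `x`,
which avoids `A` (isolated) and `y` (non-adjacent), so it ends in `S'`. -/
lemma exists_decomposition_of_not_adj {G : SimpleGraph V} {A : Set V}
    (hA : ∀ a ∈ A, ∀ b : V, ¬ G.Adj a b) {x y : V} (hx : x ∉ A) (hy : y ∉ A)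
    (hxy : x ≠ y) (hnadj : ¬ G.Adj x y) :
    ∃ A' S' B' : Set V,
      Disjoint A' S' ∧ Disjoint A' B' ∧ Disjoint S' B' ∧
      A' ∪ S' ∪ B' = Set.univ ∧
      A ⊂ A' ∧ B'.Nonempty ∧
      Separates (withClique G S') A' B' S' := by
  have hAB : Disjoint (insert x A) {y} := by
    simpa [Set.disjoint_singleton_right] using ⟨hxy.symm, hy⟩
  refine ⟨insert x A, (insert x A ∪ {y})ᶜ, {y},
    disjoint_compl_right.mono_left Set.subset_union_left, hAB,
    disjoint_compl_left.mono_right Set.subset_union_right,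
    by rw [Set.union_right_comm, Set.union_compl_self], Set.ssubset_insert hx,
    Set.singleton_nonempty y, separates_of_adj_mem hAB ?_⟩
  intro u hu huS v huv
  have hG := withClique_adj_of_notMem huS huv
  rcases hu with rfl | hu
  · have hvA : v ∉ A := fun hv => hA v hv u hG.symm
    have hvy : v ≠ y := by rintro rfl; exact hnadj hG
    right
    simp [hG.ne.symm, hvA, hvy]
  · exact absurd hG (hA u hu v)

end

theorem not_clique_iff_exists_decomposition_general
    {V : Type*}
    (G : SimpleGraph V) (A : Set V)
    (hA : ∀ a ∈ A, ∀ b : V, ¬ G.Adj a b) :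
    ¬ G.IsClique Aᶜ ↔
      ∃ A' S' B' : Set V,
        Disjoint A' S' ∧ Disjoint A' B' ∧ Disjoint S' B' ∧
        A' ∪ S' ∪ B' = Set.univ ∧
        A ⊂ A' ∧ B'.Nonempty ∧
        Separates (withClique G S') A' B' S' := by
  constructor
  · intro hnc
    simp only [SimpleGraph.isClique_iff, Set.Pairwise, not_forall] at hnc
    obtain ⟨x, hx, y, hy, hxy, hnadj⟩ := hnc
    exact exists_decomposition_of_not_adj hA hx hy hxy hnadj
  · rintro ⟨A', S', B', hA'S', hA'B', hS'B', -, ⟨hAA', hA'A⟩, ⟨b, hb⟩, hsep⟩ hclique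
    obtain ⟨a, haA', haA⟩ := Set.not_subset.mp hA'A
    have hbA : b ∉ A := fun h => hA'B'.notMem_of_mem_left (hAA' h) hb
    have hab : a ≠ b := fun h => hA'B'.notMem_of_mem_left haA' (h ▸ hb)
    exact hsep.not_adj hA'S' hS'B' haA' hb (le_withClique G S' (hclique haA hbA hab))

/-- **Existence of a further proper decomposition.**
Let `G` be a simple graph on a finite vertex set `V` and let `A` be a set of vertices with no
incident edges.  Then `V ∖ A` fails to be a clique of `G` if and only if there is a partition
`(A', S', B')` of `V` with `A ⊊ A'` and `B'` nonempty such that `S'` separates `A'` from `B'`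
in the graph obtained from `G` by turning `S'` into a clique. -/
theorem not_clique_iff_exists_decomposition
    {V : Type*} [Fintype V] [DecidableEq V]
    (G : SimpleGraph V) (A : Set V)
    (hA : ∀ a ∈ A, ∀ b : V, ¬ G.Adj a b) :
    ¬ G.IsClique Aᶜ ↔
      ∃ A' S' B' : Set V,
        Disjoint A' S' ∧ Disjoint A' B' ∧ Disjoint S' B' ∧
        A' ∪ S' ∪ B' = Set.univ ∧
        A ⊂ A' ∧ B'.Nonempty ∧
        Separates (withClique G S') A' B' S' :=
  not_clique_iff_exists_decomposition_general G A hA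
end

section
/- Let n ≥ 2 and let i ≠ j be coordinates in {1,…,n}. Let π : ℝⁿ → ℝ be infinitely differentiable and strictly positive with ∫ π = 1, and let μ = volume.withDensity π be the corresponding probability measure on ℝⁿ. Then the coordinate random variables Z_i : x ↦ x_i and Z_j : x ↦ x_j are conditionally independent, given the σ-algebra generated by the remaining coordinates (x_k)_{k ∉ {i,j}}, under μ, if and only if the mixed second partial derivative ∂_i ∂_j (log π)(x) = 0 for every x ∈ ℝⁿ. -/
open MeasureTheory ProbabilityTheory

section Calc

variable {n : ℕ}

/-- auxiliary: update as affine shift -/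
lemma update_eq_add_smul_single (x : Fin n → ℝ) (i : Fin n) (u : ℝ) :
    Function.update x i u = x + (u - x i) • (Pi.single i 1 : Fin n → ℝ) := by
  funext k
  by_cases h : k = i
  · subst h; simp
  · simp [Function.update_apply, h, Pi.single_apply, Ne.symm h]

-- line derivative of a smooth function
lemma hasDerivAt_line {L : (Fin n → ℝ) → ℝ} (hL : ContDiff ℝ (⊤ : ℕ∞) L)
    (y w : Fin n → ℝ) (t : ℝ) :
    HasDerivAt (fun t : ℝ => L (y + t • w)) (fderiv ℝ L (y + t • w) w) t := by
  have h1 : HasDerivAt (fun t : ℝ => y + t • w) w t := by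
    simpa using ((hasDerivAt_id t).smul_const w).const_add y
  exact ((hL.differentiable (by simp) (y + t • w)).hasFDerivAt).comp_hasDerivAt t h1

end Calc

section Calc2

variable {n : ℕ} {L : (Fin n → ℝ) → ℝ}

lemma constant_along (hL : ContDiff ℝ (⊤ : ℕ∞) L) {w : Fin n → ℝ}
    (h : ∀ y, fderiv ℝ L y w = 0) (y : Fin n → ℝ) (s : ℝ) :
    L (y + s • w) = L y := by
  have hd : Differentiable ℝ (fun t : ℝ => L (y + t • w)) :=
    fun t => (hasDerivAt_line hL y w t).differentiableAt
  have hz : ∀ t : ℝ, deriv (fun t : ℝ => L (y + t • w)) t = 0 := fun t => by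
    rw [(hasDerivAt_line hL y w t).deriv, h]
  have := is_const_of_deriv_eq_zero hd hz s 0
  simpa using this

lemma forward_core (hL : ContDiff ℝ (⊤ : ℕ∞) L) (i j : Fin n)
    (H : ∀ y, fderiv ℝ (fun z => fderiv ℝ L z (Pi.single j 1)) y (Pi.single i 1) = 0)
    (x : Fin n → ℝ) (s t : ℝ) :
    L (x + s • (Pi.single i 1 : Fin n → ℝ) + t • (Pi.single j 1 : Fin n → ℝ)) + L x
      = L (x + s • (Pi.single i 1 : Fin n → ℝ))
        + L (x + t • (Pi.single j 1 : Fin n → ℝ)) := by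
  set ei : Fin n → ℝ := Pi.single i 1 with hei
  set ej : Fin n → ℝ := Pi.single j 1 with hej
  set F : (Fin n → ℝ) → ℝ := fun z => fderiv ℝ L z ej with hFdef
  have hF : ContDiff ℝ (⊤ : ℕ∞) F := (hL.fderiv_right (by simp)).clm_apply contDiff_const
  have stepA : ∀ (y : Fin n → ℝ) (s : ℝ), F (y + s • ei) = F y :=
    fun y s => constant_along hF H y s
  have hderiv : ∀ t : ℝ,
      HasDerivAt (fun t : ℝ => L ((x + s • ei) + t • ej) - L (x + t • ej))
        (F ((x + s • ei) + t • ej) - F (x + t • ej)) t :=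
    fun t => (hasDerivAt_line hL (x + s • ei) ej t).sub (hasDerivAt_line hL x ej t)
  have hd : Differentiable ℝ (fun t : ℝ => L ((x + s • ei) + t • ej) - L (x + t • ej)) :=
    fun t => (hderiv t).differentiableAt
  have hz : ∀ t : ℝ,
      deriv (fun t : ℝ => L ((x + s • ei) + t • ej) - L (x + t • ej)) t = 0 := by
    intro t
    rw [(hderiv t).deriv]
    have hcomm : (x + s • ei) + t • ej = (x + t • ej) + s • ei := by
      abel
    rw [hcomm, stepA (x + t • ej) s, sub_self]
  have hconst := is_const_of_deriv_eq_zero hd hz t 0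
  simp only [zero_smul, add_zero] at hconst
  linarith [hconst]

lemma backward_core (hL : ContDiff ℝ (⊤ : ℕ∞) L) (i j : Fin n)
    (H : ∀ (x : Fin n → ℝ) (s t : ℝ),
      L (x + s • (Pi.single i 1 : Fin n → ℝ) + t • (Pi.single j 1 : Fin n → ℝ)) + L x
        = L (x + s • (Pi.single i 1 : Fin n → ℝ))
          + L (x + t • (Pi.single j 1 : Fin n → ℝ)))
    (y : Fin n → ℝ) :
    fderiv ℝ (fun z => fderiv ℝ L z (Pi.single j 1)) y (Pi.single i 1) = 0 := by
  set ei : Fin n → ℝ := Pi.single i 1 with hei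
  set ej : Fin n → ℝ := Pi.single j 1 with hej
  set F : (Fin n → ℝ) → ℝ := fun z => fderiv ℝ L z ej with hFdef
  have hF : ContDiff ℝ (⊤ : ℕ∞) F := (hL.fderiv_right (by simp)).clm_apply contDiff_const
  have hFz : ∀ z, F z = deriv (fun t : ℝ => L (z + t • ej)) 0 := by
    intro z
    rw [(hasDerivAt_line hL z ej 0).deriv]
    simp [hFdef]
  have key : ∀ s : ℝ, F (y + s • ei) = F y := by
    intro s
    rw [hFz, hFz]
    have heq : (fun t : ℝ => L ((y + s • ei) + t • ej))
        = fun t : ℝ => L (y + t • ej) + (L (y + s • ei) - L y) := by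
      funext t
      have h1 := H y s t
      linarith [h1]
    rw [heq, deriv_add_const]
  have h1 : HasDerivAt (fun s : ℝ => F (y + s • ei)) (fderiv ℝ F y ei) 0 := by
    have := hasDerivAt_line hF y ei 0
    simpa using this
  have h2 : HasDerivAt (fun s : ℝ => F (y + s • ei)) 0 0 := by
    have heq : (fun s : ℝ => F (y + s • ei)) = fun _ => F y := funext key
    rw [heq]
    exact hasDerivAt_const 0 _
  exact h1.unique h2

end Calc2

section Claim1

variable {n : ℕ}

lemma update_update_eq (i j : Fin n) (hij : i ≠ j) (x : Fin n → ℝ) (u v : ℝ) :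
    Function.update (Function.update x i u) j v
      = x + (u - x i) • (Pi.single i 1 : Fin n → ℝ)
          + (v - x j) • (Pi.single j 1 : Fin n → ℝ) := by
  have hj : (Function.update x i u) j = x j := Function.update_of_ne (Ne.symm hij) _ _
  rw [update_eq_add_smul_single (Function.update x i u) j v, hj,
      update_eq_add_smul_single x i u]

lemma claim1 (i j : Fin n) (hij : i ≠ j) (π : (Fin n → ℝ) → ℝ)
    (hπsmooth : ContDiff ℝ (⊤ : ℕ∞) π) (hπpos : ∀ x, 0 < π x) :
    (∀ x : Fin n → ℝ,
        fderiv ℝ (fun x => fderiv ℝ (fun y => Real.log (π y)) x (Pi.single j 1)) x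
          (Pi.single i 1) = 0)
      ↔ ∀ (x : Fin n → ℝ) (u v : ℝ),
          π (Function.update (Function.update x i u) j v) * π x
            = π (Function.update x i u) * π (Function.update x j v) := by
  have hL : ContDiff ℝ (⊤ : ℕ∞) (fun y => Real.log (π y)) :=
    hπsmooth.log (fun x => (hπpos x).ne')
  constructor
  · intro H x u v
    have h := forward_core hL i j H x (u - x i) (v - x j)
    rw [update_update_eq i j hij x u v, update_eq_add_smul_single x i u,
        update_eq_add_smul_single x j v]
    have h2 := congrArg Real.exp h
    rw [Real.exp_add, Real.exp_add, Real.exp_log (hπpos _), Real.exp_log (hπpos _),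
        Real.exp_log (hπpos _), Real.exp_log (hπpos _)] at h2
    exact h2
  · intro H y
    refine backward_core hL i j (fun x s t => ?_) y
    have h := H x (x i + s) (x j + t)
    have e1 : Function.update x i (x i + s)
        = x + s • (Pi.single i 1 : Fin n → ℝ) := by
      rw [update_eq_add_smul_single]; simp
    have e2 : Function.update x j (x j + t)
        = x + t • (Pi.single j 1 : Fin n → ℝ) := by
      rw [update_eq_add_smul_single]; simp
    have e3 : Function.update (Function.update x i (x i + s)) j (x j + t)
        = x + s • (Pi.single i 1 : Fin n → ℝ)
            + t • (Pi.single j 1 : Fin n → ℝ) := by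
      rw [update_update_eq i j hij]; simp
    rw [e3, e1, e2] at h
    have h2 := congrArg Real.log h
    rw [Real.log_mul (hπpos _).ne' (hπpos _).ne',
        Real.log_mul (hπpos _).ne' (hπpos _).ne'] at h2
    exact h2

end Claim1

noncomputable section EquivSec

open scoped Classical

variable {n : ℕ}

/-- the index set of "other" coordinates -/
def Sset (i j : Fin n) : Set (Fin n) := {i, j}ᶜ

/-- the type of the "other" coordinates -/
abbrev Aty (i j : Fin n) : Type := ∀ _k : (Sset i j), ℝ

def pairEquiv (i j : Fin n) (hij : i ≠ j) :
    Fin 2 ≃ {k : Fin n // ¬ k ∈ Sset i j} where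
  toFun a := if a = 0 then ⟨i, by simp [Sset]⟩ else ⟨j, by simp [Sset]⟩
  invFun k := if (k : Fin n) = i then 0 else 1
  left_inv a := by
    fin_cases a <;> simp [hij.symm, hij]
  right_inv k := by
    obtain ⟨k, hk⟩ := k
    simp only [Sset, Set.mem_compl_iff, not_not, Set.mem_insert_iff,
      Set.mem_singleton_iff] at hk
    rcases hk with rfl | rfl
    · simp
    · simp [Ne.symm hij, hij]

def fullEquiv (i j : Fin n) (hij : i ≠ j) :
    (Fin n → ℝ) ≃ᵐ ((Aty i j) × (ℝ × ℝ)) :=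
  (MeasurableEquiv.piEquivPiSubtypeProd (fun _ => ℝ) (fun k => k ∈ Sset i j)).trans
    ((MeasurableEquiv.refl _).prodCongr
      (((MeasurableEquiv.piCongrLeft (fun _ => ℝ) (pairEquiv i j hij)).symm).trans
        MeasurableEquiv.finTwoArrow))

lemma fullEquiv_measurePreserving (i j : Fin n) (hij : i ≠ j) :
    MeasurePreserving (fullEquiv i j hij) volume volume := by
  rw [fullEquiv, MeasurableEquiv.coe_trans]
  refine MeasurePreserving.comp ?_ (volume_preserving_piEquivPiSubtypeProd (fun _ => ℝ) _)
  have h1 : MeasurePreserving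
      (MeasurableEquiv.piCongrLeft (fun _ : {k : Fin n // ¬ k ∈ Sset i j} => ℝ)
        (pairEquiv i j hij)) volume volume :=
    measurePreserving_piCongrLeft (fun _ => (volume : Measure ℝ)) (pairEquiv i j hij)
  have h3 : MeasurePreserving
      ((((MeasurableEquiv.piCongrLeft (fun _ => ℝ) (pairEquiv i j hij)).symm).trans
        MeasurableEquiv.finTwoArrow)) volume volume :=
    (volume_preserving_finTwoArrow ℝ).comp (h1.symm _)
  have h4 : MeasurePreserving (MeasurableEquiv.refl (Aty i j)) volume volume :=
    MeasurePreserving.id _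
  have := h4.prod h3
  rw [← Measure.volume_eq_prod, ← Measure.volume_eq_prod] at this
  exact this

lemma fullEquiv_apply (i j : Fin n) (hij : i ≠ j) (x : Fin n → ℝ) :
    fullEquiv i j hij x = ((Sset i j).restrict x, (x i, x j)) := by
  simp only [fullEquiv, MeasurableEquiv.trans_apply]
  ext
  · rfl
  · simp [MeasurableEquiv.finTwoArrow, MeasurableEquiv.piCongrLeft, MeasurableEquiv.prodCongr,
      MeasurableEquiv.piFinTwo, MeasurableEquiv.piEquivPiSubtypeProd,
      Equiv.piCongrLeft_symm_apply, pairEquiv]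
  · simp [MeasurableEquiv.finTwoArrow, MeasurableEquiv.piCongrLeft, MeasurableEquiv.prodCongr,
      MeasurableEquiv.piFinTwo, MeasurableEquiv.piEquivPiSubtypeProd,
      Equiv.piCongrLeft_symm_apply, pairEquiv, hij.symm]

end EquivSec

noncomputable section BuildSec

open scoped Classical

variable {n : ℕ}

def build (i j : Fin n) (hij : i ≠ j) (a : Aty i j) (u v : ℝ) : Fin n → ℝ :=
  (fullEquiv i j hij).symm (a, (u, v))

lemma build_spec (i j : Fin n) (hij : i ≠ j) (x : Fin n → ℝ) (u v : ℝ) :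
    build i j hij ((Sset i j).restrict x) u v
      = Function.update (Function.update x i u) j v := by
  apply (fullEquiv i j hij).injective
  rw [build, MeasurableEquiv.apply_symm_apply, fullEquiv_apply _ _ hij]
  have hi : ¬ (i ∈ Sset i j) := by simp [Sset]
  have hj : ¬ (j ∈ Sset i j) := by simp [Sset]
  refine Prod.ext ?_ (Prod.ext ?_ ?_)
  · funext k
    have hk := k.2
    simp only [Sset, Set.mem_compl_iff, Set.mem_insert_iff, Set.mem_singleton_iff,
      not_or] at hk
    simp only [Set.restrict_apply]
    show x k = Function.update (Function.update x i u) j v k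
    rw [Function.update_of_ne hk.2, Function.update_of_ne hk.1]
  · simp only
    rw [Function.update_of_ne hij, Function.update_self]
  · simp only
    rw [Function.update_self]

lemma build_restrict_self (i j : Fin n) (hij : i ≠ j) (x : Fin n → ℝ) :
    build i j hij ((Sset i j).restrict x) (x i) (x j) = x := by
  rw [build_spec, Function.update_eq_self, Function.update_eq_self]

lemma build_coords (i j : Fin n) (hij : i ≠ j) (a : Aty i j) (u v : ℝ) :
    (Sset i j).restrict (build i j hij a u v) = a
      ∧ (build i j hij a u v) i = u ∧ (build i j hij a u v) j = v := by
  have h := fullEquiv_apply i j hij (build i j hij a u v)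
  rw [build, MeasurableEquiv.apply_symm_apply] at h
  refine ⟨?_, ?_, ?_⟩
  · exact (congrArg Prod.fst h).symm
  · exact (congrArg (fun z => z.2.1) h).symm
  · exact (congrArg (fun z => z.2.2) h).symm

end BuildSec

noncomputable section ProbSec

open scoped Classical ENNReal NNReal

variable {n : ℕ}

def Dfun (i j : Fin n) (hij : i ≠ j) (π : (Fin n → ℝ) → ℝ) :
    (Aty i j × (ℝ × ℝ)) → ℝ := fun z => π ((fullEquiv i j hij).symm z)

lemma Dfun_eq_build (i j : Fin n) (hij : i ≠ j) (π : (Fin n → ℝ) → ℝ)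
    (a : Aty i j) (uv : ℝ × ℝ) :
    Dfun i j hij π (a, uv) = π (build i j hij a uv.1 uv.2) := by
  simp [Dfun, build]

lemma measurable_Dfun (i j : Fin n) (hij : i ≠ j) {π : (Fin n → ℝ) → ℝ}
    (hπ : Continuous π) : Measurable (Dfun i j hij π) :=
  hπ.measurable.comp (MeasurableEquiv.measurable _)

lemma integrable_Dfun (i j : Fin n) (hij : i ≠ j) {π : (Fin n → ℝ) → ℝ}
    (hπint' : Integrable π volume) : Integrable (Dfun i j hij π) volume := by
  have mp := (fullEquiv_measurePreserving i j hij).symm (fullEquiv i j hij)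
  exact (mp.integrable_comp_emb (MeasurableEquiv.measurableEmbedding _)).2 hπint'

lemma integrable_pos (π : (Fin n → ℝ) → ℝ) (hπpos : ∀ x, 0 < π x)
    (hπint : ∫ x, π x = 1) : Integrable π volume := by
  by_contra h
  rw [integral_undef h] at hπint
  norm_num at hπint

/-- transfer of integrals against `μ` to the split product space -/
lemma integral_mu (i j : Fin n) (hij : i ≠ j) {π : (Fin n → ℝ) → ℝ}
    (hπm : Measurable π) (hπnn : ∀ x, 0 ≤ π x)
    (G : (Fin n → ℝ) → ℝ) :
    ∫ x, G x ∂((volume : Measure (Fin n → ℝ)).withDensity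
        (fun x => ENNReal.ofReal (π x)))
      = ∫ z, G ((fullEquiv i j hij).symm z) * Dfun i j hij π z := by
  have h0 : (fun x : Fin n → ℝ => ENNReal.ofReal (π x))
      = (fun x => ((Real.toNNReal (π x) : ℝ≥0) : ℝ≥0∞)) := rfl
  rw [h0, integral_withDensity_eq_integral_smul (f := fun x => (π x).toNNReal)
      (measurable_real_toNNReal.comp hπm) G]
  have h1 : ∀ x, Real.toNNReal (π x) • G x = G x * π x := by
    intro x
    simp [NNReal.smul_def, Real.coe_toNNReal _ (hπnn x), mul_comm]
  simp_rw [h1]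
  have mp := (fullEquiv_measurePreserving i j hij).symm (fullEquiv i j hij)
  rw [← mp.integral_comp (MeasurableEquiv.measurableEmbedding _) (fun x => G x * π x)]
  rfl

end ProbSec

noncomputable section ProbSec2

open scoped Classical ENNReal NNReal

variable {n : ℕ}

def numf (i j : Fin n) (hij : i ≠ j) (π : (Fin n → ℝ) → ℝ) (T : Set (ℝ × ℝ)) :
    Aty i j → ℝ :=
  fun a => ∫ uv, T.indicator (fun w => Dfun i j hij π (a, w)) uv

def denf (i j : Fin n) (hij : i ≠ j) (π : (Fin n → ℝ) → ℝ) : Aty i j → ℝ :=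
  fun a => ∫ uv, Dfun i j hij π (a, uv)

def gfun (i j : Fin n) (hij : i ≠ j) (π : (Fin n → ℝ) → ℝ) (T : Set (ℝ × ℝ)) :
    Aty i j → ℝ :=
  fun a => numf i j hij π T a / denf i j hij π a

lemma sm_numf (i j : Fin n) (hij : i ≠ j) {π : (Fin n → ℝ) → ℝ}
    (hπ : Continuous π) (T : Set (ℝ × ℝ)) (hT : MeasurableSet T) :
    StronglyMeasurable (numf i j hij π T) := by
  have h : Function.uncurry (fun (a : Aty i j) w =>
      T.indicator (fun w => Dfun i j hij π (a, w)) w)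
      = (Set.univ ×ˢ T).indicator (Dfun i j hij π) := by
    funext z
    by_cases hz : z.2 ∈ T
    · simp [Function.uncurry, Set.indicator_of_mem, hz, Set.mem_prod]
    · simp [Function.uncurry, Set.indicator_of_notMem, hz, Set.mem_prod]
  have h2 : StronglyMeasurable (Function.uncurry (fun (a : Aty i j) w =>
      T.indicator (fun w => Dfun i j hij π (a, w)) w)) := by
    rw [h]
    exact ((measurable_Dfun i j hij hπ).stronglyMeasurable).indicator
      (MeasurableSet.univ.prod hT)
  exact h2.integral_prod_right

lemma sm_denf (i j : Fin n) (hij : i ≠ j) {π : (Fin n → ℝ) → ℝ}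
    (hπ : Continuous π) : StronglyMeasurable (denf i j hij π) := by
  have h : Function.uncurry (fun (a : Aty i j) w => Dfun i j hij π (a, w))
      = Dfun i j hij π := by
    funext z; simp [Function.uncurry]
  have h2 : StronglyMeasurable (Function.uncurry (fun (a : Aty i j) w =>
      Dfun i j hij π (a, w))) := by
    rw [h]; exact (measurable_Dfun i j hij hπ).stronglyMeasurable
  exact h2.integral_prod_right

lemma sm_gfun (i j : Fin n) (hij : i ≠ j) {π : (Fin n → ℝ) → ℝ}
    (hπ : Continuous π) (T : Set (ℝ × ℝ)) (hT : MeasurableSet T) :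
    StronglyMeasurable (gfun i j hij π T) :=
  ((sm_numf i j hij hπ T hT).measurable.div
    (sm_denf i j hij hπ).measurable).stronglyMeasurable

lemma numf_nonneg (i j : Fin n) (hij : i ≠ j) {π : (Fin n → ℝ) → ℝ}
    (hπnn : ∀ x, 0 ≤ π x) (T : Set (ℝ × ℝ)) (a : Aty i j) :
    0 ≤ numf i j hij π T a := by
  refine integral_nonneg fun w => ?_
  exact Set.indicator_nonneg (fun w _ => hπnn _) w

lemma denf_nonneg (i j : Fin n) (hij : i ≠ j) {π : (Fin n → ℝ) → ℝ}
    (hπnn : ∀ x, 0 ≤ π x) (a : Aty i j) : 0 ≤ denf i j hij π a :=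
  integral_nonneg fun w => hπnn _

lemma gfun_nonneg (i j : Fin n) (hij : i ≠ j) {π : (Fin n → ℝ) → ℝ}
    (hπnn : ∀ x, 0 ≤ π x) (T : Set (ℝ × ℝ)) (a : Aty i j) :
    0 ≤ gfun i j hij π T a :=
  div_nonneg (numf_nonneg i j hij hπnn T a) (denf_nonneg i j hij hπnn a)

lemma gfun_le_one (i j : Fin n) (hij : i ≠ j) {π : (Fin n → ℝ) → ℝ}
    (hπnn : ∀ x, 0 ≤ π x) (T : Set (ℝ × ℝ)) (hT : MeasurableSet T) (a : Aty i j) :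
    gfun i j hij π T a ≤ 1 := by
  by_cases h : Integrable (fun uv : ℝ × ℝ => Dfun i j hij π (a, uv)) volume
  · have hle : numf i j hij π T a ≤ denf i j hij π a := by
      refine integral_mono (h.indicator hT) h fun w => ?_
      exact Set.indicator_le_self' (fun w _ => hπnn _) w
    exact div_le_one_of_le₀ hle (denf_nonneg i j hij hπnn a)
  · have : denf i j hij π a = 0 := integral_undef h
    simp [gfun, this]

lemma ae_good (i j : Fin n) (hij : i ≠ j) {π : (Fin n → ℝ) → ℝ}
    (hπcont : Continuous π) (hπpos : ∀ x, 0 < π x)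
    (hπint' : Integrable π volume) :
    ∀ᵐ a ∂(volume : Measure (Aty i j)),
      Integrable (fun uv : ℝ × ℝ => Dfun i j hij π (a, uv)) volume
        ∧ 0 < denf i j hij π a := by
  have hint := integrable_Dfun i j hij hπint'
  rw [Measure.volume_eq_prod] at hint
  filter_upwards [hint.prod_right_ae] with a ha
  have hpos : 0 < ∫ uv : ℝ × ℝ, Dfun i j hij π (a, uv) := by
    rw [integral_pos_iff_support_of_nonneg_ae
        (f := fun uv : ℝ × ℝ => Dfun i j hij π (a, uv))
        (Filter.Eventually.of_forall fun w => (hπpos _).le) ha]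
    have hsupp : Function.support (fun uv : ℝ × ℝ => Dfun i j hij π (a, uv))
        = Set.univ := by
      ext w
      simp only [Function.mem_support, Set.mem_univ, iff_true]
      exact (hπpos _).ne'
    rw [hsupp]
    exact isOpen_univ.measure_pos volume ⟨(0, 0), trivial⟩
  exact ⟨ha, hpos⟩

lemma symm_props (i j : Fin n) (hij : i ≠ j) (z : Aty i j × (ℝ × ℝ)) :
    (Sset i j).restrict ((fullEquiv i j hij).symm z) = z.1
      ∧ ((fullEquiv i j hij).symm z) i = z.2.1
      ∧ ((fullEquiv i j hij).symm z) j = z.2.2 := by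
  have h := fullEquiv_apply i j hij ((fullEquiv i j hij).symm z)
  rw [MeasurableEquiv.apply_symm_apply] at h
  exact ⟨congrArg Prod.fst h.symm, congrArg (fun w => w.2.1) h.symm,
    congrArg (fun w => w.2.2) h.symm⟩

lemma setIntegral_mu (i j : Fin n) (hij : i ≠ j) {π : (Fin n → ℝ) → ℝ}
    (hπm : Measurable π) (hπnn : ∀ x, 0 ≤ π x)
    (G : (Fin n → ℝ) → ℝ) (B : Set (Aty i j)) (hB : MeasurableSet B) :
    ∫ x in ((Sset i j).restrict ⁻¹' B), G x
        ∂((volume : Measure (Fin n → ℝ)).withDensity (fun x => ENNReal.ofReal (π x)))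
      = ∫ z in B ×ˢ (Set.univ : Set (ℝ × ℝ)),
          G ((fullEquiv i j hij).symm z) * Dfun i j hij π z := by
  rw [← integral_indicator (show MeasurableSet (((Sset i j).restrict : (Fin n → ℝ) → Aty i j) ⁻¹' B) from (Set.measurable_restrict _) hB),
    integral_mu i j hij hπm hπnn, ← integral_indicator (hB.prod MeasurableSet.univ)]
  congr 1
  funext z
  by_cases hz : z.1 ∈ B
  · have hmem : (fullEquiv i j hij).symm z ∈ (Sset i j).restrict ⁻¹' B := by
      simp only [Set.mem_preimage, (symm_props i j hij z).1]; exact hz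
    rw [Set.indicator_of_mem hmem, Set.indicator_of_mem (by simp [hz] : z ∈ B ×ˢ Set.univ)]
  · have hmem : (fullEquiv i j hij).symm z ∉ (Sset i j).restrict ⁻¹' B := by
      simp only [Set.mem_preimage, (symm_props i j hij z).1]; exact hz
    rw [Set.indicator_of_notMem hmem,
      Set.indicator_of_notMem (by simp [hz] : z ∉ B ×ˢ Set.univ), zero_mul]

end ProbSec2

noncomputable section ProbSec3

open scoped Classical ENNReal NNReal

variable {n : ℕ}

lemma condexp_pair_eq (i j : Fin n) (hij : i ≠ j) {π : (Fin n → ℝ) → ℝ}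
    (hπcont : Continuous π) (hπpos : ∀ x, 0 < π x) (hπint' : Integrable π volume)
    (μ : Measure (Fin n → ℝ)) [IsProbabilityMeasure μ]
    (hμ : μ = (volume : Measure (Fin n → ℝ)).withDensity (fun x => ENNReal.ofReal (π x)))
    (T : Set (ℝ × ℝ)) (hT : MeasurableSet T) :
    condExp (MeasurableSpace.comap ((Sset i j).restrict) inferInstance) μ
        (((fun x : Fin n → ℝ => (x i, x j)) ⁻¹' T).indicator (fun _ => (1:ℝ)))
      =ᵐ[μ] fun x => gfun i j hij π T ((Sset i j).restrict x) := by
  have hm' : (MeasurableSpace.comap ((Sset i j).restrict) inferInstance)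
      ≤ (inferInstance : MeasurableSpace (Fin n → ℝ)) :=
    (Set.measurable_restrict _).comap_le
  haveI : IsFiniteMeasure (μ.trim hm') := isFiniteMeasure_trim hm'
  have hπm : Measurable π := hπcont.measurable
  have hπnn : ∀ x, 0 ≤ π x := fun x => (hπpos x).le
  have hTmeas : MeasurableSet ((fun x : Fin n → ℝ => (x i, x j)) ⁻¹' T) :=
    ((measurable_pi_apply i).prodMk (measurable_pi_apply j)) hT
  have hDi := integrable_Dfun i j hij hπint'
  have hgsm : StronglyMeasurable (gfun i j hij π T) := sm_gfun i j hij hπcont T hT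
  refine (ae_eq_condExp_of_forall_setIntegral_eq hm'
    ((integrable_const (1:ℝ)).indicator hTmeas) ?_ ?_ ?_).symm
  · intro s _ _
    refine Integrable.integrableOn ?_
    refine Integrable.mono' (integrable_const (1:ℝ))
      ((hgsm.comp_measurable (Set.measurable_restrict _)).aestronglyMeasurable) ?_
    refine Filter.Eventually.of_forall fun x => ?_
    rw [Real.norm_eq_abs, abs_of_nonneg (gfun_nonneg i j hij hπnn T _)]
    exact gfun_le_one i j hij hπnn T hT _
  · intro s hs _
    obtain ⟨B, hB, rfl⟩ := hs
    subst hμ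
    rw [setIntegral_mu i j hij hπm hπnn _ B hB, setIntegral_mu i j hij hπm hπnn _ B hB]
    have h1 : ∀ z : Aty i j × (ℝ × ℝ),
        gfun i j hij π T ((Sset i j).restrict ((fullEquiv i j hij).symm z))
          * Dfun i j hij π z
          = gfun i j hij π T z.1 * Dfun i j hij π z := by
      intro z; rw [(symm_props i j hij z).1]
    have h2 : ∀ z : Aty i j × (ℝ × ℝ),
        ((fun x : Fin n → ℝ => (x i, x j)) ⁻¹' T).indicator (fun _ => (1:ℝ))
            ((fullEquiv i j hij).symm z) * Dfun i j hij π z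
          = T.indicator (fun _ => (1:ℝ)) z.2 * Dfun i j hij π z := by
      intro z
      congr 1
      have hmem : (fullEquiv i j hij).symm z ∈ ((fun x : Fin n → ℝ => (x i, x j)) ⁻¹' T)
          ↔ z.2 ∈ T := by
        simp only [Set.mem_preimage, (symm_props i j hij z).2.1,
          (symm_props i j hij z).2.2]
      by_cases hz : z.2 ∈ T
      · rw [Set.indicator_of_mem (hmem.2 hz), Set.indicator_of_mem hz]
      · rw [Set.indicator_of_notMem (fun h => hz (hmem.1 h)), Set.indicator_of_notMem hz]
    simp_rw [h1, h2]
    rw [Measure.volume_eq_prod] at hDi ⊢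
    -- Fubini on both sides
    have hint1 : IntegrableOn (fun z : Aty i j × (ℝ × ℝ) =>
        gfun i j hij π T z.1 * Dfun i j hij π z) (B ×ˢ Set.univ)
        ((volume : Measure (Aty i j)).prod (volume : Measure (ℝ × ℝ))) := by
      refine Integrable.integrableOn ?_
      refine hDi.bdd_mul (c := 1) ((hgsm.comp_measurable measurable_fst).aestronglyMeasurable) ?_
      refine Filter.Eventually.of_forall fun z => ?_
      rw [Real.norm_eq_abs, abs_of_nonneg (gfun_nonneg i j hij hπnn T _)]
      exact gfun_le_one i j hij hπnn T hT _
    have hint2 : IntegrableOn (fun z : Aty i j × (ℝ × ℝ) =>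
        T.indicator (fun _ => (1:ℝ)) z.2 * Dfun i j hij π z) (B ×ˢ Set.univ)
        ((volume : Measure (Aty i j)).prod (volume : Measure (ℝ × ℝ))) := by
      refine Integrable.integrableOn ?_
      refine hDi.bdd_mul (c := 1) (((measurable_const.indicator hT).comp
        measurable_snd).stronglyMeasurable.aestronglyMeasurable) ?_
      refine Filter.Eventually.of_forall fun z => ?_
      rw [Real.norm_eq_abs]
      by_cases hz : z.2 ∈ T
      · rw [Set.indicator_of_mem hz]; norm_num
      · rw [Set.indicator_of_notMem hz]; norm_num
    rw [setIntegral_prod _ hint1, setIntegral_prod _ hint2]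
    simp only [Measure.restrict_univ]
    have hinner2 : ∀ a : Aty i j,
        ∫ uv : ℝ × ℝ, T.indicator (fun _ => (1:ℝ)) uv * Dfun i j hij π (a, uv)
          = numf i j hij π T a := by
      intro a
      congr 1
      funext uv
      by_cases hz : uv ∈ T
      · rw [Set.indicator_of_mem hz, Set.indicator_of_mem hz, one_mul]
      · rw [Set.indicator_of_notMem hz, Set.indicator_of_notMem hz, zero_mul]
    simp_rw [hinner2, MeasureTheory.integral_const_mul]
    refine setIntegral_congr_ae hB ?_
    filter_upwards [ae_good i j hij hπcont hπpos hπint'] with a ha _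
    rcases ha with ⟨hInt, hpos⟩
    have hden : denf i j hij π a ≠ 0 := hpos.ne'
    rw [show (∫ uv : ℝ × ℝ, Dfun i j hij π (a, uv)) = denf i j hij π a from rfl]
    rw [gfun, div_mul_cancel₀ _ hden]
  · exact ⟨fun x => gfun i j hij π T ((Sset i j).restrict x),
      hgsm.comp_measurable (measurable_iff_comap_le.2 le_rfl),
      Filter.EventuallyEq.rfl⟩

end ProbSec3

noncomputable section ProbSec4

open scoped Classical ENNReal NNReal

variable {n : ℕ}

lemma mu_null_iff {π : (Fin n → ℝ) → ℝ} (hπm : Measurable π) (hπpos : ∀ x, 0 < π x)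
    (s : Set (Fin n → ℝ)) :
    ((volume : Measure (Fin n → ℝ)).withDensity (fun x => ENNReal.ofReal (π x))) s = 0
      ↔ (volume : Measure (Fin n → ℝ)) s = 0 := by
  rw [withDensity_apply_eq_zero (hπm.ennreal_ofReal)]
  have : {x : Fin n → ℝ | ENNReal.ofReal (π x) ≠ 0} = Set.univ := by
    ext x
    simp [ENNReal.ofReal_eq_zero, not_le, hπpos x]
  rw [this, Set.univ_inter]

lemma ae_comap_iff (i j : Fin n) (hij : i ≠ j) {π : (Fin n → ℝ) → ℝ}
    (hπm : Measurable π) (hπpos : ∀ x, 0 < π x)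
    (P : Aty i j → Prop) (hP : MeasurableSet {a | P a}) :
    (∀ᵐ x ∂((volume : Measure (Fin n → ℝ)).withDensity
        (fun x => ENNReal.ofReal (π x))), P ((Sset i j).restrict x))
      ↔ ∀ᵐ a ∂(volume : Measure (Aty i j)), P a := by
  rw [ae_iff, ae_iff, mu_null_iff hπm hπpos]
  have hset : {x : Fin n → ℝ | ¬ P ((Sset i j).restrict x)}
      = (fullEquiv i j hij) ⁻¹' ({a | ¬ P a} ×ˢ (Set.univ : Set (ℝ × ℝ))) := by
    ext x
    simp only [Set.mem_setOf_eq, Set.mem_preimage, fullEquiv_apply i j hij x,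
      Set.mem_prod, Set.mem_univ, and_true]
  have hPc : MeasurableSet {a : Aty i j | ¬ P a} := hP.compl
  rw [hset, (fullEquiv_measurePreserving i j hij).measure_preimage
    ((hPc.prod MeasurableSet.univ).nullMeasurableSet),
    Measure.volume_eq_prod, Measure.prod_prod]
  have hvol : (volume : Measure (ℝ × ℝ)) Set.univ ≠ 0 :=
    (isOpen_univ.measure_pos volume ⟨(0, 0), trivial⟩).ne'
  constructor
  · intro h
    rcases mul_eq_zero.1 h with h' | h'
    · exact h'
    · exact absurd h' hvol
  · intro h; rw [h, zero_mul]

lemma condIndep_iff_aspace (i j : Fin n) (hij : i ≠ j) {π : (Fin n → ℝ) → ℝ}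
    (hπcont : Continuous π) (hπpos : ∀ x, 0 < π x) (hπint' : Integrable π volume)
    (μ : Measure (Fin n → ℝ)) [IsProbabilityMeasure μ]
    (hμ : μ = (volume : Measure (Fin n → ℝ)).withDensity (fun x => ENNReal.ofReal (π x))) :
    CondIndepFun
        (MeasurableSpace.comap (((Sset i j) : Set (Fin n)).restrict) inferInstance)
        ((Set.measurable_restrict ((Sset i j) : Set (Fin n))).comap_le)
        (fun x => x i) (fun x => x j) μ ↔
      ∀ s t : Set ℝ, MeasurableSet s → MeasurableSet t →
        ∀ᵐ a ∂(volume : Measure (Aty i j)),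
          gfun i j hij π (s ×ˢ t) a
            = gfun i j hij π (s ×ˢ (Set.univ : Set ℝ)) a
              * gfun i j hij π ((Set.univ : Set ℝ) ×ˢ t) a := by
  have hπm : Measurable π := hπcont.measurable
  refine (condIndepFun_iff_condExp_inter_preimage_eq_mul
    (measurable_pi_apply i) (measurable_pi_apply j)).trans ?_
  have hpre : ∀ (s t : Set ℝ), (fun x : Fin n → ℝ => x i) ⁻¹' s ∩ (fun x => x j) ⁻¹' t
      = (fun x : Fin n → ℝ => (x i, x j)) ⁻¹' (s ×ˢ t) := by
    intro s t; ext x; simp [Set.mem_prod]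
  constructor
  · intro h s t hs ht
    have h1 := h s t hs ht
    rw [hpre s t] at h1
    have hst := condexp_pair_eq i j hij hπcont hπpos hπint' μ hμ (s ×ˢ t) (hs.prod ht)
    have hsu := condexp_pair_eq i j hij hπcont hπpos hπint' μ hμ
      (s ×ˢ (Set.univ : Set ℝ)) (hs.prod MeasurableSet.univ)
    have hut := condexp_pair_eq i j hij hπcont hπpos hπint' μ hμ
      ((Set.univ : Set ℝ) ×ˢ t) (MeasurableSet.univ.prod ht)
    have hs' : (fun x : Fin n → ℝ => x i) ⁻¹' s
        = (fun x : Fin n → ℝ => (x i, x j)) ⁻¹' (s ×ˢ (Set.univ : Set ℝ)) := by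
      rw [← hpre s Set.univ]; simp
    have ht' : (fun x : Fin n → ℝ => x j) ⁻¹' t
        = (fun x : Fin n → ℝ => (x i, x j)) ⁻¹' ((Set.univ : Set ℝ) ×ˢ t) := by
      rw [← hpre Set.univ t]; simp
    rw [hs', ht'] at h1
    have key : (fun x : Fin n → ℝ => gfun i j hij π (s ×ˢ t) ((Sset i j).restrict x))
        =ᵐ[μ] fun x => gfun i j hij π (s ×ˢ (Set.univ : Set ℝ)) ((Sset i j).restrict x)
          * gfun i j hij π ((Set.univ : Set ℝ) ×ˢ t) ((Sset i j).restrict x) :=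
      hst.symm.trans (h1.trans (Filter.EventuallyEq.mul hsu hut))
    rw [hμ] at key
    have := (ae_comap_iff i j hij hπm hπpos
      (fun a => gfun i j hij π (s ×ˢ t) a
        = gfun i j hij π (s ×ˢ (Set.univ : Set ℝ)) a
          * gfun i j hij π ((Set.univ : Set ℝ) ×ˢ t) a)
      (measurableSet_eq_fun (sm_gfun i j hij hπcont _ (hs.prod ht)).measurable
        (((sm_gfun i j hij hπcont _ (hs.prod MeasurableSet.univ)).measurable).mul
          ((sm_gfun i j hij hπcont _ (MeasurableSet.univ.prod ht)).measurable)))).1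
    exact this key
  · intro h s t hs ht
    have key : (fun x : Fin n → ℝ => gfun i j hij π (s ×ˢ t) ((Sset i j).restrict x))
        =ᵐ[μ] fun x => gfun i j hij π (s ×ˢ (Set.univ : Set ℝ)) ((Sset i j).restrict x)
          * gfun i j hij π ((Set.univ : Set ℝ) ×ˢ t) ((Sset i j).restrict x) := by
      rw [hμ]
      exact (ae_comap_iff i j hij hπm hπpos _
        (measurableSet_eq_fun (sm_gfun i j hij hπcont _ (hs.prod ht)).measurable
          (((sm_gfun i j hij hπcont _ (hs.prod MeasurableSet.univ)).measurable).mul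
            ((sm_gfun i j hij hπcont _ (MeasurableSet.univ.prod ht)).measurable)))).2
        (h s t hs ht)
    have hst := condexp_pair_eq i j hij hπcont hπpos hπint' μ hμ (s ×ˢ t) (hs.prod ht)
    have hsu := condexp_pair_eq i j hij hπcont hπpos hπint' μ hμ
      (s ×ˢ (Set.univ : Set ℝ)) (hs.prod MeasurableSet.univ)
    have hut := condexp_pair_eq i j hij hπcont hπpos hπint' μ hμ
      ((Set.univ : Set ℝ) ×ˢ t) (MeasurableSet.univ.prod ht)
    have hs' : (fun x : Fin n → ℝ => x i) ⁻¹' s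
        = (fun x : Fin n → ℝ => (x i, x j)) ⁻¹' (s ×ˢ (Set.univ : Set ℝ)) := by
      rw [← hpre s Set.univ]; simp
    have ht' : (fun x : Fin n → ℝ => x j) ⁻¹' t
        = (fun x : Fin n → ℝ => (x i, x j)) ⁻¹' ((Set.univ : Set ℝ) ×ˢ t) := by
      rw [← hpre Set.univ t]; simp
    rw [hpre s t, hs', ht']
    exact hst.trans (key.trans ((Filter.EventuallyEq.mul hsu hut).symm))

end ProbSec4

noncomputable section ProbSec5

open scoped Classical ENNReal NNReal

variable {n : ℕ}

lemma cross_of_fact (i j : Fin n) (hij : i ≠ j) {π : (Fin n → ℝ) → ℝ}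
    (hFact : ∀ (x : Fin n → ℝ) (u v : ℝ),
      π (Function.update (Function.update x i u) j v) * π x
        = π (Function.update x i u) * π (Function.update x j v))
    (a : Aty i j) (u v u' v' : ℝ) :
    Dfun i j hij π (a, (u, v)) * Dfun i j hij π (a, (u', v'))
      = Dfun i j hij π (a, (u, v')) * Dfun i j hij π (a, (u', v)) := by
  set x := build i j hij a u' v' with hx
  have hra : (Sset i j).restrict x = a := (build_coords i j hij a u' v').1
  have hxi : x i = u' := (build_coords i j hij a u' v').2.1
  have hxj : x j = v' := (build_coords i j hij a u' v').2.2
  have e_uv : build i j hij a u v = Function.update (Function.update x i u) j v := by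
    rw [← hra, build_spec]
  have e_uv' : build i j hij a u v' = Function.update x i u := by
    rw [← hra, build_spec]
    have h1 : (Function.update x i u) j = v' := by
      rw [Function.update_of_ne (Ne.symm hij), hxj]
    rw [← h1, Function.update_eq_self]
  have e_u'v : build i j hij a u' v = Function.update x j v := by
    rw [← hra, build_spec, ← hxi, Function.update_eq_self]
  have hD : ∀ (p q : ℝ), Dfun i j hij π (a, (p, q)) = π (build i j hij a p q) :=
    fun p q => Dfun_eq_build i j hij π a (p, q)
  rw [hD, hD, hD, hD, e_uv, e_uv', e_u'v, ← hx]
  exact hFact x u v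

lemma aspace_of_fact (i j : Fin n) (hij : i ≠ j) {π : (Fin n → ℝ) → ℝ}
    (hπcont : Continuous π) (hπpos : ∀ x, 0 < π x) (hπint' : Integrable π volume)
    (hFact : ∀ (x : Fin n → ℝ) (u v : ℝ),
      π (Function.update (Function.update x i u) j v) * π x
        = π (Function.update x i u) * π (Function.update x j v))
    (s t : Set ℝ) :
    ∀ᵐ a ∂(volume : Measure (Aty i j)),
      gfun i j hij π (s ×ˢ t) a
        = gfun i j hij π (s ×ˢ (Set.univ : Set ℝ)) a
          * gfun i j hij π ((Set.univ : Set ℝ) ×ˢ t) a := by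
  filter_upwards [ae_good i j hij hπcont hπpos hπint'] with a ha
  obtain ⟨_hInt, hpos⟩ := ha
  set Af : ℝ → ℝ := fun u => Dfun i j hij π (a, (u, 0)) with hAf
  set Bf : ℝ → ℝ := fun v => Dfun i j hij π (a, (0, v)) / Dfun i j hij π (a, (0, 0))
    with hBf
  have h00 : 0 < Dfun i j hij π (a, (0, 0)) := hπpos _
  have hprod : ∀ uv : ℝ × ℝ, Dfun i j hij π (a, uv) = Af uv.1 * Bf uv.2 := by
    intro uv
    have hc := cross_of_fact i j hij hFact a uv.1 uv.2 0 0
    rw [hAf, hBf]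
    simp only
    rw [mul_div_assoc'] at *
    rw [eq_div_iff h00.ne']
    have : (uv.1, uv.2) = uv := rfl
    rw [← this]
    linarith [hc]
  have hnum : ∀ (s' t' : Set ℝ), numf i j hij π (s' ×ˢ t') a
      = (∫ u, s'.indicator Af u) * (∫ v, t'.indicator Bf v) := by
    intro s' t'
    have heq : (fun uv : ℝ × ℝ => (s' ×ˢ t').indicator
        (fun w => Dfun i j hij π (a, w)) uv)
        = fun uv => (s'.indicator Af uv.1) * (t'.indicator Bf uv.2) := by
      funext uv
      by_cases h1 : uv.1 ∈ s' <;> by_cases h2 : uv.2 ∈ t'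
      · rw [Set.indicator_of_mem (Set.mem_prod.2 ⟨h1, h2⟩),
          Set.indicator_of_mem h1, Set.indicator_of_mem h2]
        exact hprod uv
      · rw [Set.indicator_of_notMem (fun h => h2 (Set.mem_prod.1 h).2),
          Set.indicator_of_notMem h2, mul_zero]
      · rw [Set.indicator_of_notMem (fun h => h1 (Set.mem_prod.1 h).1),
          Set.indicator_of_notMem h1, zero_mul]
      · rw [Set.indicator_of_notMem (fun h => h1 (Set.mem_prod.1 h).1),
          Set.indicator_of_notMem h1, zero_mul]
    show (∫ uv : ℝ × ℝ, (s' ×ˢ t').indicator (fun w => Dfun i j hij π (a, w)) uv) = _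
    rw [heq, Measure.volume_eq_prod, integral_prod_mul]
  have hden : denf i j hij π a = (∫ u, Af u) * (∫ v, Bf v) := by
    have heq : (fun uv : ℝ × ℝ => Dfun i j hij π (a, uv))
        = fun uv => Af uv.1 * Bf uv.2 := funext hprod
    show (∫ uv : ℝ × ℝ, Dfun i j hij π (a, uv)) = _
    rw [heq, Measure.volume_eq_prod, integral_prod_mul]
  have hMN : (∫ u, Af u) * (∫ v, Bf v) ≠ 0 := by rw [← hden]; exact hpos.ne'
  obtain ⟨hM, hN⟩ := mul_ne_zero_iff.1 hMN
  have hu1 : numf i j hij π (s ×ˢ (Set.univ : Set ℝ)) a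
      = (∫ u, s.indicator Af u) * (∫ v, Bf v) := by
    rw [hnum s Set.univ, Set.indicator_univ]
  have hu2 : numf i j hij π ((Set.univ : Set ℝ) ×ˢ t) a
      = (∫ u, Af u) * (∫ v, t.indicator Bf v) := by
    rw [hnum Set.univ t, Set.indicator_univ]
  rw [gfun, gfun, gfun, hnum s t, hu1, hu2, hden]
  field_simp

end ProbSec5

noncomputable section ProbSec6

open scoped Classical ENNReal NNReal

variable {n : ℕ}

lemma plane_gen :
    (inferInstance : MeasurableSpace (ℝ × ℝ))
      = MeasurableSpace.generateFrom
          (Set.image2 (fun s t => s ×ˢ t) (⋃ q : ℚ, {Set.Iio (q : ℝ)})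
            (⋃ q : ℚ, {Set.Iio (q : ℝ)})) := by
  have hsp : IsCountablySpanning (⋃ q : ℚ, {Set.Iio (q : ℝ)}) := by
    refine ⟨fun m => Set.Iio (((Denumerable.eqv ℚ).symm m : ℚ) : ℝ), fun m => ?_, ?_⟩
    · exact Set.mem_iUnion.2 ⟨(Denumerable.eqv ℚ).symm m, rfl⟩
    · ext x
      simp only [Set.mem_iUnion, Set.mem_univ, iff_true, Set.mem_Iio]
      obtain ⟨q, hq⟩ := exists_rat_gt x
      exact ⟨(Denumerable.eqv ℚ) q, by simpa using hq⟩
  have h1 : (inferInstance : MeasurableSpace ℝ)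
      = MeasurableSpace.generateFrom (⋃ q : ℚ, {Set.Iio (q : ℝ)}) := by
    rw [BorelSpace.measurable_eq (α := ℝ), Real.borel_eq_generateFrom_Iio_rat]
  have h2 := generateFrom_prod_eq hsp hsp
  rw [← h1] at h2
  exact h2

lemma plane_pi :
    IsPiSystem (Set.image2 (fun s t => s ×ˢ t) (⋃ q : ℚ, {Set.Iio (q : ℝ)})
      (⋃ q : ℚ, {Set.Iio (q : ℝ)})) := by
  rintro S hS T hT -
  obtain ⟨s1, hs1, t1, ht1, rfl⟩ := hS
  obtain ⟨s2, hs2, t2, ht2, rfl⟩ := hT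
  simp only [Set.mem_iUnion, Set.mem_singleton_iff] at hs1 ht1 hs2 ht2
  obtain ⟨q1, rfl⟩ := hs1; obtain ⟨r1, rfl⟩ := ht1
  obtain ⟨q2, rfl⟩ := hs2; obtain ⟨r2, rfl⟩ := ht2
  rw [Set.prod_inter_prod, Set.Iio_inter_Iio, Set.Iio_inter_Iio]
  refine ⟨Set.Iio ((q1 ⊓ q2 : ℚ) : ℝ), ?_, Set.Iio ((r1 ⊓ r2 : ℚ) : ℝ), ?_, ?_⟩
  · exact Set.mem_iUnion.2 ⟨q1 ⊓ q2, rfl⟩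
  · exact Set.mem_iUnion.2 ⟨r1 ⊓ r2, rfl⟩
  · rw [Rat.cast_min, Rat.cast_min]

lemma null_mixed₁ {N : Set (ℝ × ℝ)} (hN : MeasurableSet N)
    (h0 : (volume : Measure (ℝ × ℝ)) N = 0) :
    (volume : Measure ((ℝ × ℝ) × (ℝ × ℝ))) {pq | (pq.1.1, pq.2.2) ∈ N} = 0 := by
  have hSmeas : MeasurableSet {pq : (ℝ × ℝ) × (ℝ × ℝ) | (pq.1.1, pq.2.2) ∈ N} :=
    ((measurable_fst.fst).prodMk (measurable_snd.snd)) hN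
  rw [Measure.volume_eq_prod] at h0 ⊢
  rw [Measure.measure_prod_null hSmeas]
  have hae1 : ∀ᵐ u ∂(volume : Measure ℝ), (volume : Measure ℝ) (Prod.mk u ⁻¹' N) = 0 := by
    filter_upwards [Measure.measure_ae_null_of_prod_null h0] with u hu
    exact hu
  have hae2 : ∀ᵐ p ∂(volume : Measure (ℝ × ℝ)),
      (volume : Measure ℝ) (Prod.mk p.1 ⁻¹' N) = 0 := by
    rw [ae_iff] at hae1 ⊢
    refine measure_mono_null
      (t := {u : ℝ | ¬ (volume : Measure ℝ) (Prod.mk u ⁻¹' N) = 0} ×ˢ (Set.univ : Set ℝ))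
      (fun p hp => ⟨hp, trivial⟩) ?_
    rw [Measure.volume_eq_prod, Measure.prod_prod, hae1, zero_mul]
  filter_upwards [hae2] with p hp
  have hpre : (Prod.mk p ⁻¹' {pq : (ℝ × ℝ) × (ℝ × ℝ) | (pq.1.1, pq.2.2) ∈ N})
      = (Set.univ : Set ℝ) ×ˢ (Prod.mk p.1 ⁻¹' N) := by
    ext q
    simp only [Set.mem_preimage, Set.mem_setOf_eq, Set.mem_prod, Set.mem_univ,
      true_and]
  show (volume : Measure (ℝ × ℝ)) _ = 0
  rw [hpre, Measure.volume_eq_prod, Measure.prod_prod, hp, mul_zero]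

lemma null_mixed₂ {N : Set (ℝ × ℝ)} (hN : MeasurableSet N)
    (h0 : (volume : Measure (ℝ × ℝ)) N = 0) :
    (volume : Measure ((ℝ × ℝ) × (ℝ × ℝ))) {pq | (pq.2.1, pq.1.2) ∈ N} = 0 := by
  have hSmeas : MeasurableSet {pq : (ℝ × ℝ) × (ℝ × ℝ) | (pq.2.1, pq.1.2) ∈ N} :=
    ((measurable_snd.fst).prodMk (measurable_fst.snd)) hN
  rw [Measure.volume_eq_prod] at h0 ⊢
  rw [Measure.measure_prod_null hSmeas]
  -- sections of N in the second variable
  have hswap : (volume : Measure (ℝ × ℝ)) (Prod.swap ⁻¹' N) = 0 := by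
    rw [Measure.volume_eq_prod]
    rw [show ((volume : Measure ℝ).prod volume) (Prod.swap ⁻¹' N)
        = ((volume : Measure ℝ).prod volume) N from
      Measure.measurePreserving_swap.measure_preimage hN.nullMeasurableSet]
    exact h0
  rw [Measure.volume_eq_prod] at hswap
  have hae1 : ∀ᵐ v ∂(volume : Measure ℝ),
      (volume : Measure ℝ) {u : ℝ | (u, v) ∈ N} = 0 := by
    filter_upwards [Measure.measure_ae_null_of_prod_null hswap] with v hv
    have hid : (Prod.mk v ⁻¹' (Prod.swap ⁻¹' N)) = {u : ℝ | (u, v) ∈ N} := rfl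
    rw [← hid]
    exact hv
  have hae2 : ∀ᵐ p ∂(volume : Measure (ℝ × ℝ)),
      (volume : Measure ℝ) {u : ℝ | (u, p.2) ∈ N} = 0 := by
    rw [ae_iff] at hae1 ⊢
    refine measure_mono_null
      (t := (Set.univ : Set ℝ) ×ˢ {v : ℝ | ¬ (volume : Measure ℝ) {u : ℝ | (u, v) ∈ N} = 0})
      (fun p hp => ⟨trivial, hp⟩) ?_
    rw [Measure.volume_eq_prod, Measure.prod_prod, hae1, mul_zero]
  filter_upwards [hae2] with p hp
  have hpre : (Prod.mk p ⁻¹' {pq : (ℝ × ℝ) × (ℝ × ℝ) | (pq.2.1, pq.1.2) ∈ N})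
      = {u : ℝ | (u, p.2) ∈ N} ×ˢ (Set.univ : Set ℝ) := by
    ext q
    simp only [Set.mem_preimage, Set.mem_setOf_eq, Set.mem_prod, Set.mem_univ,
      and_true]
  show (volume : Measure (ℝ × ℝ)) _ = 0
  rw [hpre, Measure.volume_eq_prod, Measure.prod_prod, hp, zero_mul]

end ProbSec6

noncomputable section ProbSec7

open scoped Classical ENNReal NNReal

variable {n : ℕ}

lemma cross_ae_of_rect (i j : Fin n) (hij : i ≠ j) {π : (Fin n → ℝ) → ℝ}
    (hπcont : Continuous π) (hπpos : ∀ x, 0 < π x)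
    (a : Aty i j)
    (hInt : Integrable (fun uv : ℝ × ℝ => Dfun i j hij π (a, uv)) volume)
    (hpos : 0 < denf i j hij π a)
    (hrect : ∀ q1 q2 : ℚ,
      gfun i j hij π (Set.Iio (q1 : ℝ) ×ˢ Set.Iio (q2 : ℝ)) a
        = gfun i j hij π (Set.Iio (q1 : ℝ) ×ˢ (Set.univ : Set ℝ)) a
          * gfun i j hij π ((Set.univ : Set ℝ) ×ˢ Set.Iio (q2 : ℝ)) a) :
    ∀ᵐ pq : (ℝ × ℝ) × (ℝ × ℝ) ∂volume,
      Dfun i j hij π (a, pq.2) * Dfun i j hij π (a, pq.1)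
        = Dfun i j hij π (a, (pq.2.1, pq.1.2))
          * Dfun i j hij π (a, (pq.1.1, pq.2.2)) := by
  set Da : ℝ × ℝ → ℝ := fun uv => Dfun i j hij π (a, uv) with hDadef
  have hDa : Measurable Da :=
    (measurable_Dfun i j hij hπcont).comp (measurable_const.prodMk measurable_id)
  have hDann : ∀ uv, 0 ≤ Da uv := fun uv => (hπpos _).le
  set den : ℝ := denf i j hij π a with hdendef
  -- set-integral description of numf
  have hR : ∀ T : Set (ℝ × ℝ), MeasurableSet T →
      numf i j hij π T a = ∫ uv in T, Da uv := by
    intro T hT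
    show (∫ uv, T.indicator (fun w => Dfun i j hij π (a, w)) uv) = _
    exact integral_indicator hT
  set ρ : Measure (ℝ × ℝ) :=
    (volume : Measure (ℝ × ℝ)).withDensity (fun uv => ENNReal.ofReal (Da uv)) with hρdef
  have hρT : ∀ T : Set (ℝ × ℝ), MeasurableSet T →
      ρ T = ENNReal.ofReal (∫ uv in T, Da uv) := by
    intro T hT
    rw [hρdef, withDensity_apply _ hT,
      ← ofReal_integral_eq_lintegral_ofReal hInt.integrableOn
        (Filter.Eventually.of_forall fun uv => hDann uv)]
  have hden_int : (∫ uv, Da uv) = den := rfl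
  have hρuniv : ρ Set.univ = ENNReal.ofReal den := by
    rw [hρT Set.univ MeasurableSet.univ, setIntegral_univ, hden_int]
  haveI : IsFiniteMeasure ρ := ⟨by rw [hρuniv]; exact ENNReal.ofReal_lt_top⟩
  set c : ℝ≥0∞ := ENNReal.ofReal den with hcdef
  have hc0 : c ≠ 0 := by
    rw [hcdef]
    simpa [ENNReal.ofReal_eq_zero, not_le] using hpos
  have hctop : c ≠ ⊤ := ENNReal.ofReal_ne_top
  set μ₁ : Measure (ℝ × ℝ) := c • ρ with hμ₁def
  set μ₂ : Measure (ℝ × ℝ) := (ρ.map Prod.fst).prod (ρ.map Prod.snd) with hμ₂def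
  have hfstpre : ∀ s : Set ℝ, (Prod.fst ⁻¹' s : Set (ℝ × ℝ)) = s ×ˢ Set.univ := by
    intro s; ext z; simp [Set.mem_prod]
  have hsndpre : ∀ t : Set ℝ, (Prod.snd ⁻¹' t : Set (ℝ × ℝ)) = Set.univ ×ˢ t := by
    intro t; ext z; simp [Set.mem_prod]
  haveI : IsFiniteMeasure μ₁ := by
    refine ⟨?_⟩
    rw [hμ₁def, Measure.smul_apply, smul_eq_mul, hρuniv]
    exact ENNReal.mul_lt_top ENNReal.ofReal_lt_top ENNReal.ofReal_lt_top
  -- the two measures agree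
  have hkey : μ₁ = μ₂ := by
    refine ext_of_generate_finite _ plane_gen plane_pi ?_ ?_
    · rintro S ⟨s, hs, t, ht, rfl⟩
      simp only [Set.mem_iUnion, Set.mem_singleton_iff] at hs ht
      obtain ⟨q1, rfl⟩ := hs
      obtain ⟨q2, rfl⟩ := ht
      have hs' : MeasurableSet (Set.Iio (q1 : ℝ)) := measurableSet_Iio
      have ht' : MeasurableSet (Set.Iio (q2 : ℝ)) := measurableSet_Iio
      have hreal : den * (∫ uv in Set.Iio (q1:ℝ) ×ˢ Set.Iio (q2:ℝ), Da uv)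
          = (∫ uv in Set.Iio (q1:ℝ) ×ˢ (Set.univ : Set ℝ), Da uv)
            * (∫ uv in (Set.univ : Set ℝ) ×ˢ Set.Iio (q2:ℝ), Da uv) := by
        have h := hrect q1 q2
        rw [gfun, gfun, gfun, hR _ (hs'.prod ht'), hR _ (hs'.prod MeasurableSet.univ),
          hR _ (MeasurableSet.univ.prod ht'), ← hdendef] at h
        have hden0 : den ≠ 0 := hpos.ne'
        field_simp at h
        nlinarith [h]
      rw [hμ₁def, Measure.smul_apply, smul_eq_mul,
        hρT _ (hs'.prod ht'), hμ₂def, Measure.prod_prod,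
        Measure.map_apply measurable_fst hs', Measure.map_apply measurable_snd ht',
        hfstpre, hsndpre, hρT _ (hs'.prod MeasurableSet.univ),
        hρT _ (MeasurableSet.univ.prod ht'), hcdef,
        ← ENNReal.ofReal_mul (hpos.le),
        ← ENNReal.ofReal_mul (integral_nonneg fun uv => hDann uv), hreal]
    · rw [hμ₁def, Measure.smul_apply, smul_eq_mul, hρuniv, hμ₂def,
        ← Set.univ_prod_univ, Measure.prod_prod,
        Measure.map_apply measurable_fst MeasurableSet.univ,
        Measure.map_apply measurable_snd MeasurableSet.univ,
        Set.preimage_univ, Set.preimage_univ, hρuniv, hcdef]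
  -- marginal densities
  set mh : ℝ → ℝ≥0∞ := fun u => ∫⁻ v, ENNReal.ofReal (Da (u, v)) with hmhdef
  set nh : ℝ → ℝ≥0∞ := fun v => ∫⁻ u, ENNReal.ofReal (Da (u, v)) with hnhdef
  have huncurry : Function.uncurry (fun u v => ENNReal.ofReal (Da (u, v)))
      = fun z : ℝ × ℝ => ENNReal.ofReal (Da z) := by
    funext z; simp [Function.uncurry]
  have hmh : Measurable mh := by
    refine Measurable.lintegral_prod_right ?_
    rw [huncurry]; exact hDa.ennreal_ofReal
  have hnh : Measurable nh := by
    refine Measurable.lintegral_prod_left ?_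
    rw [huncurry]; exact hDa.ennreal_ofReal
  have hmap1 : ρ.map Prod.fst = (volume : Measure ℝ).withDensity mh := by
    refine Measure.ext fun s hs => ?_
    rw [Measure.map_apply measurable_fst hs, hfstpre, hρdef,
      withDensity_apply _ (hs.prod MeasurableSet.univ), withDensity_apply _ hs]
    rw [Measure.volume_eq_prod, ← Measure.prod_restrict, Measure.restrict_univ,
      lintegral_prod _ (hDa.ennreal_ofReal.aemeasurable)]
  have hmap2 : ρ.map Prod.snd = (volume : Measure ℝ).withDensity nh := by
    refine Measure.ext fun t ht => ?_
    rw [Measure.map_apply measurable_snd ht, hsndpre, hρdef,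
      withDensity_apply _ (MeasurableSet.univ.prod ht), withDensity_apply _ ht]
    rw [Measure.volume_eq_prod, ← Measure.prod_restrict, Measure.restrict_univ,
      lintegral_prod_symm _ (hDa.ennreal_ofReal.aemeasurable)]
  have hμ₂wd : μ₂ = (volume : Measure (ℝ × ℝ)).withDensity
      (fun z => mh z.1 * nh z.2) := by
    rw [hμ₂def, hmap1, hmap2]
    haveI : IsFiniteMeasure ((volume : Measure ℝ).withDensity mh) := by
      rw [← hmap1]; infer_instance
    haveI : IsFiniteMeasure ((volume : Measure ℝ).withDensity nh) := by
      rw [← hmap2]; infer_instance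
    refine Measure.prod_eq fun s t hs ht => ?_
    rw [withDensity_apply _ (hs.prod ht), withDensity_apply _ hs,
      withDensity_apply _ ht]
    rw [Measure.volume_eq_prod, ← Measure.prod_restrict,
      lintegral_prod (fun z : ℝ × ℝ => mh z.1 * nh z.2)
        (((hmh.comp measurable_fst).mul (hnh.comp measurable_snd)).aemeasurable)]
    simp_rw [lintegral_const_mul _ hnh]
    rw [lintegral_mul_const _ hmh]
  have hμ₁wd : μ₁ = (volume : Measure (ℝ × ℝ)).withDensity
      (fun z => c * ENNReal.ofReal (Da z)) := by
    rw [hμ₁def, hρdef, ← withDensity_smul c hDa.ennreal_ofReal]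
    rfl
  have hwd_eq : (volume : Measure (ℝ × ℝ)).withDensity
      (fun z => c * ENNReal.ofReal (Da z))
      = (volume : Measure (ℝ × ℝ)).withDensity (fun z => mh z.1 * nh z.2) := by
    rw [← hμ₁wd, ← hμ₂wd, hkey]
  have hlint : (∫⁻ z : ℝ × ℝ, c * ENNReal.ofReal (Da z)) ≠ ⊤ := by
    rw [lintegral_const_mul _ hDa.ennreal_ofReal]
    have : (∫⁻ z : ℝ × ℝ, ENNReal.ofReal (Da z)) = ρ Set.univ := by
      rw [hρdef, withDensity_apply _ MeasurableSet.univ, Measure.restrict_univ]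
    rw [this, hρuniv]
    exact ENNReal.mul_ne_top hctop ENNReal.ofReal_ne_top
  have hdens : (fun z : ℝ × ℝ => c * ENNReal.ofReal (Da z))
      =ᵐ[(volume : Measure (ℝ × ℝ))] (fun z => mh z.1 * nh z.2) :=
    (withDensity_eq_iff ((measurable_const.mul hDa.ennreal_ofReal).aemeasurable)
      (((hmh.comp measurable_fst).mul (hnh.comp measurable_snd)).aemeasurable)
      hlint).1 hwd_eq
  -- upgrade to the four-point identity
  set N : Set (ℝ × ℝ) := {z | ¬ c * ENNReal.ofReal (Da z) = mh z.1 * nh z.2} with hNdef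
  have hNmeas : MeasurableSet N := by
    have hmeas := measurableSet_eq_fun
      (f := fun z : ℝ × ℝ => c * ENNReal.ofReal (Da z))
      (g := fun z : ℝ × ℝ => mh z.1 * nh z.2)
      (measurable_const.mul hDa.ennreal_ofReal)
      ((hmh.comp measurable_fst).mul (hnh.comp measurable_snd))
    exact hmeas.compl
  have hN0 : (volume : Measure (ℝ × ℝ)) N = 0 := by
    rw [← ae_iff] at *
    exact hdens
  have h1 : ∀ᵐ pq : (ℝ × ℝ) × (ℝ × ℝ) ∂volume, pq.1 ∉ N := by
    refine measure_eq_zero_iff_ae_notMem.1 ?_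
    refine measure_mono_null (t := N ×ˢ (Set.univ : Set (ℝ × ℝ)))
      (fun pq hpq => Set.mem_prod.2 ⟨hpq, trivial⟩) ?_
    rw [Measure.volume_eq_prod, Measure.prod_prod, hN0, zero_mul]
  have h2 : ∀ᵐ pq : (ℝ × ℝ) × (ℝ × ℝ) ∂volume, pq.2 ∉ N := by
    refine measure_eq_zero_iff_ae_notMem.1 ?_
    refine measure_mono_null (t := (Set.univ : Set (ℝ × ℝ)) ×ˢ N)
      (fun pq hpq => Set.mem_prod.2 ⟨trivial, hpq⟩) ?_
    rw [Measure.volume_eq_prod, Measure.prod_prod, hN0, mul_zero]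
  have h3 : ∀ᵐ pq : (ℝ × ℝ) × (ℝ × ℝ) ∂volume, (pq.1.1, pq.2.2) ∉ N :=
    measure_eq_zero_iff_ae_notMem.1 (null_mixed₁ hNmeas hN0)
  have h4 : ∀ᵐ pq : (ℝ × ℝ) × (ℝ × ℝ) ∂volume, (pq.2.1, pq.1.2) ∉ N :=
    measure_eq_zero_iff_ae_notMem.1 (null_mixed₂ hNmeas hN0)
  filter_upwards [h1, h2, h3, h4] with pq hp hq hm1 hm2
  simp only [hNdef, Set.mem_setOf_eq, not_not] at hp hq hm1 hm2
  have key : (c * ENNReal.ofReal (Da pq.2)) * (c * ENNReal.ofReal (Da pq.1))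
      = (c * ENNReal.ofReal (Da (pq.2.1, pq.1.2)))
        * (c * ENNReal.ofReal (Da (pq.1.1, pq.2.2))) := by
    rw [hp, hq, hm1, hm2]
    ring
  have key2 : c * (c * (ENNReal.ofReal (Da pq.2) * ENNReal.ofReal (Da pq.1)))
      = c * (c * (ENNReal.ofReal (Da (pq.2.1, pq.1.2))
        * ENNReal.ofReal (Da (pq.1.1, pq.2.2)))) := by
    calc c * (c * (ENNReal.ofReal (Da pq.2) * ENNReal.ofReal (Da pq.1)))
        = (c * ENNReal.ofReal (Da pq.2)) * (c * ENNReal.ofReal (Da pq.1)) := by ring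
      _ = (c * ENNReal.ofReal (Da (pq.2.1, pq.1.2)))
          * (c * ENNReal.ofReal (Da (pq.1.1, pq.2.2))) := key
      _ = c * (c * (ENNReal.ofReal (Da (pq.2.1, pq.1.2))
          * ENNReal.ofReal (Da (pq.1.1, pq.2.2)))) := by ring
  have key3 := (ENNReal.mul_right_inj hc0 hctop).1
    ((ENNReal.mul_right_inj hc0 hctop).1 key2)
  rw [← ENNReal.ofReal_mul (hDann _), ← ENNReal.ofReal_mul (hDann _)] at key3
  exact (ENNReal.ofReal_eq_ofReal_iff
    (mul_nonneg (hDann _) (hDann _)) (mul_nonneg (hDann _) (hDann _))).1 key3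

end ProbSec7

noncomputable section ProbSec8

open scoped Classical ENNReal NNReal

variable {n : ℕ}

lemma continuous_update_coord (k : Fin n) :
    Continuous (fun w : (Fin n → ℝ) × ℝ => Function.update w.1 k w.2) := by
  apply continuous_pi
  intro l
  by_cases hl : l = k
  · subst hl
    simp only [Function.update_self]
    exact continuous_snd
  · simp only [Function.update_of_ne hl]
    exact (continuous_apply l).comp continuous_fst

lemma fact_of_condIndep (i j : Fin n) (hij : i ≠ j) {π : (Fin n → ℝ) → ℝ}
    (hπcont : Continuous π) (hπpos : ∀ x, 0 < π x) (hπint' : Integrable π volume)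
    (hyp : ∀ s t : Set ℝ, MeasurableSet s → MeasurableSet t →
      ∀ᵐ a ∂(volume : Measure (Aty i j)),
        gfun i j hij π (s ×ˢ t) a
          = gfun i j hij π (s ×ˢ (Set.univ : Set ℝ)) a
            * gfun i j hij π ((Set.univ : Set ℝ) ×ˢ t) a) :
    ∀ (x : Fin n → ℝ) (u v : ℝ),
      π (Function.update (Function.update x i u) j v) * π x
        = π (Function.update x i u) * π (Function.update x j v) := by
  -- step 1: a.e. slice has all rational-rectangle identities
  have hae_a : ∀ᵐ a ∂(volume : Measure (Aty i j)),
      (Integrable (fun uv : ℝ × ℝ => Dfun i j hij π (a, uv)) volume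
        ∧ 0 < denf i j hij π a)
      ∧ ∀ q1 q2 : ℚ,
        gfun i j hij π (Set.Iio (q1 : ℝ) ×ˢ Set.Iio (q2 : ℝ)) a
          = gfun i j hij π (Set.Iio (q1 : ℝ) ×ˢ (Set.univ : Set ℝ)) a
            * gfun i j hij π ((Set.univ : Set ℝ) ×ˢ Set.Iio (q2 : ℝ)) a := by
    refine (ae_good i j hij hπcont hπpos hπint').and ?_
    rw [ae_all_iff]
    intro q1
    rw [ae_all_iff]
    intro q2
    exact hyp _ _ measurableSet_Iio measurableSet_Iio
  have hae_cross : ∀ᵐ a ∂(volume : Measure (Aty i j)),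
      ∀ᵐ pq : (ℝ × ℝ) × (ℝ × ℝ) ∂volume,
        Dfun i j hij π (a, pq.2) * Dfun i j hij π (a, pq.1)
          = Dfun i j hij π (a, (pq.2.1, pq.1.2))
            * Dfun i j hij π (a, (pq.1.1, pq.2.2)) := by
    filter_upwards [hae_a] with a ha
    exact cross_ae_of_rect i j hij hπcont hπpos a ha.1.1 ha.1.2 ha.2
  -- step 2: joint a.e. statement on the product space
  set Sbad : Set (Aty i j × ((ℝ × ℝ) × (ℝ × ℝ))) :=
    {z | ¬ (Dfun i j hij π (z.1, z.2.2) * Dfun i j hij π (z.1, z.2.1)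
      = Dfun i j hij π (z.1, (z.2.2.1, z.2.1.2))
        * Dfun i j hij π (z.1, (z.2.1.1, z.2.2.2)))} with hSbaddef
  have hDm := measurable_Dfun i j hij hπcont
  have hSbadmeas : MeasurableSet Sbad := by
    refine (measurableSet_eq_fun ?_ ?_).compl
    · exact (hDm.comp (measurable_fst.prodMk (measurable_snd.snd))).mul
        (hDm.comp (measurable_fst.prodMk (measurable_snd.fst)))
    · exact (hDm.comp (measurable_fst.prodMk
        ((measurable_snd.snd.fst).prodMk (measurable_snd.fst.snd)))).mul
        (hDm.comp (measurable_fst.prodMk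
          ((measurable_snd.fst.fst).prodMk (measurable_snd.snd.snd))))
  have hSbad0 : (volume : Measure (Aty i j × ((ℝ × ℝ) × (ℝ × ℝ)))) Sbad = 0 := by
    rw [Measure.volume_eq_prod, Measure.measure_prod_null hSbadmeas]
    filter_upwards [hae_cross] with a ha
    show (volume : Measure ((ℝ × ℝ) × (ℝ × ℝ))) _ = 0
    rw [show (Prod.mk a ⁻¹' Sbad)
        = {pq : (ℝ × ℝ) × (ℝ × ℝ) | ¬ (Dfun i j hij π (a, pq.2) * Dfun i j hij π (a, pq.1)
          = Dfun i j hij π (a, (pq.2.1, pq.1.2))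
            * Dfun i j hij π (a, (pq.1.1, pq.2.2)))} from rfl]
    rw [← ae_iff] at *
    exact ha
  -- step 3: pull back to the original space
  set Φ : (Fin n → ℝ) × (ℝ × ℝ) → Aty i j × ((ℝ × ℝ) × (ℝ × ℝ)) :=
    fun w => ((fullEquiv i j hij w.1).1, ((fullEquiv i j hij w.1).2, w.2)) with hΦdef
  have hΦmp : MeasurePreserving Φ volume volume := by
    have h1 : MeasurePreserving
        (Prod.map (fullEquiv i j hij) (id : (ℝ × ℝ) → (ℝ × ℝ))) volume volume := by
      have := (fullEquiv_measurePreserving i j hij).prod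
        (MeasurePreserving.id (volume : Measure (ℝ × ℝ)))
      rwa [← Measure.volume_eq_prod, ← Measure.volume_eq_prod] at this
    have h2 : MeasurePreserving
        (⇑(MeasurableEquiv.prodAssoc :
          ((Aty i j × (ℝ × ℝ)) × (ℝ × ℝ)) ≃ᵐ (Aty i j × ((ℝ × ℝ) × (ℝ × ℝ)))))
        volume volume := volume_preserving_prodAssoc
    exact h2.comp h1
  have hpull : (volume : Measure ((Fin n → ℝ) × (ℝ × ℝ))) (Φ ⁻¹' Sbad) = 0 := by
    rw [hΦmp.measure_preimage hSbadmeas.nullMeasurableSet]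
    exact hSbad0
  have hae_x : ∀ᵐ w : (Fin n → ℝ) × (ℝ × ℝ) ∂volume,
      π (Function.update (Function.update w.1 i w.2.1) j w.2.2) * π w.1
        = π (Function.update w.1 i w.2.1) * π (Function.update w.1 j w.2.2) := by
    filter_upwards [measure_eq_zero_iff_ae_notMem.1 hpull] with w hw
    simp only [Set.mem_preimage, hSbaddef, Set.mem_setOf_eq, not_not, hΦdef] at hw
    have hfe := fullEquiv_apply i j hij w.1
    have h1 : (fullEquiv i j hij w.1).1 = (Sset i j).restrict w.1 := by rw [hfe]
    have h2 : (fullEquiv i j hij w.1).2 = (w.1 i, w.1 j) := by rw [hfe]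
    rw [h1, h2] at hw
    set a : Aty i j := (Sset i j).restrict w.1
    have e1 : Dfun i j hij π (a, w.2)
        = π (Function.update (Function.update w.1 i w.2.1) j w.2.2) := by
      rw [show (a, w.2) = (a, (w.2.1, w.2.2)) from rfl, Dfun_eq_build, build_spec]
    have e2 : Dfun i j hij π (a, (w.1 i, w.1 j)) = π w.1 := by
      rw [Dfun_eq_build]
      simp only
      rw [build_restrict_self]
    have e3 : Dfun i j hij π (a, (w.2.1, w.1 j))
        = π (Function.update w.1 i w.2.1) := by
      rw [Dfun_eq_build]
      simp only
      rw [build_spec]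
      have hju : (Function.update w.1 i w.2.1) j = w.1 j :=
        Function.update_of_ne (Ne.symm hij) _ _
      rw [← hju, Function.update_eq_self]
    have e4 : Dfun i j hij π (a, (w.1 i, w.2.2))
        = π (Function.update w.1 j w.2.2) := by
      rw [Dfun_eq_build]
      simp only
      rw [build_spec, Function.update_eq_self]
    rw [e1, e2, e3, e4] at hw
    exact hw
  -- step 4: continuity upgrade
  have c1 : Continuous (fun w : (Fin n → ℝ) × (ℝ × ℝ) =>
      Function.update w.1 i w.2.1) :=
    (continuous_update_coord i).comp (continuous_fst.prodMk continuous_snd.fst)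
  have c2 : Continuous (fun w : (Fin n → ℝ) × (ℝ × ℝ) =>
      Function.update (Function.update w.1 i w.2.1) j w.2.2) :=
    (continuous_update_coord j).comp (c1.prodMk continuous_snd.snd)
  have c3 : Continuous (fun w : (Fin n → ℝ) × (ℝ × ℝ) =>
      Function.update w.1 j w.2.2) :=
    (continuous_update_coord j).comp (continuous_fst.prodMk continuous_snd.snd)
  have hEcont : Continuous (fun w : (Fin n → ℝ) × (ℝ × ℝ) =>
      π (Function.update (Function.update w.1 i w.2.1) j w.2.2) * π w.1
        - π (Function.update w.1 i w.2.1) * π (Function.update w.1 j w.2.2)) :=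
    ((hπcont.comp c2).mul (hπcont.comp continuous_fst)).sub
      ((hπcont.comp c1).mul (hπcont.comp c3))
  have hE0 : (fun w : (Fin n → ℝ) × (ℝ × ℝ) =>
      π (Function.update (Function.update w.1 i w.2.1) j w.2.2) * π w.1
        - π (Function.update w.1 i w.2.1) * π (Function.update w.1 j w.2.2))
      = fun _ => (0 : ℝ) := by
    rw [← Continuous.ae_eq_iff_eq volume hEcont continuous_const]
    filter_upwards [hae_x] with w hw
    rw [hw, sub_self]
  intro x u v
  have := congrFun hE0 (x, (u, v))
  simp only at this
  linarith [this]

end ProbSec8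

/-- **Pairwise conditional independence via mixed partials of the log-density.**
If `π` is a smooth, strictly positive probability density on `ℝⁿ` and `μ` is the associated
probability measure, then the coordinates `Z_i` and `Z_j` (`i ≠ j`) are conditionally
independent given the remaining coordinates if and only if `∂_i ∂_j log π` vanishes
identically on `ℝⁿ`. -/
theorem pairwise_condIndep_iff_mixed_partial_log_density_eq_zero
    (n : ℕ) (hn : 2 ≤ n) (i j : Fin n) (hij : i ≠ j)
    (π : (Fin n → ℝ) → ℝ)
    (hπsmooth : ContDiff ℝ (⊤ : ℕ∞) π) (hπpos : ∀ x, 0 < π x)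
    (hπint : ∫ x, π x = 1)
    (μ : Measure (Fin n → ℝ)) [IsProbabilityMeasure μ]
    (hμ : μ = (volume : Measure (Fin n → ℝ)).withDensity (fun x => ENNReal.ofReal (π x))) :
    CondIndepFun
        (MeasurableSpace.comap (({i, j}ᶜ : Set (Fin n)).restrict) inferInstance)
        ((Set.measurable_restrict ({i, j}ᶜ : Set (Fin n))).comap_le)
        (fun x => x i) (fun x => x j) μ ↔
      ∀ x : Fin n → ℝ,
        fderiv ℝ (fun x => fderiv ℝ (fun y => Real.log (π y)) x (Pi.single j 1)) x
          (Pi.single i 1) = 0 := by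
  have hπcont : Continuous π := hπsmooth.continuous
  have hπint' : Integrable π volume := integrable_pos π hπpos hπint
  rw [claim1 i j hij π hπsmooth hπpos]
  exact (condIndep_iff_aspace i j hij hπcont hπpos hπint' μ hμ).trans
    ⟨fun h => fact_of_condIndep i j hij hπcont hπpos hπint' h,
     fun hFact s t _ _ => aspace_of_fact i j hij hπcont hπpos hπint' hFact s t⟩
end

section
/- Let n ≥ 1 and let T : ℝⁿ → ℝⁿ be a Borel measurable lower triangular bijection such that for every k and every x ∈ ℝⁿ the diagonal section s_{k,x} : t ↦ T(Function.update x k t)_k is a strictly increasing continuous bijection of ℝ onto ℝ that maps Lebesgue-null sets of ℝ to Lebesgue-null sets (Luzin's condition (N); for an increasing continuous function this is equivalent to absolute continuity on every compact interval). Define det∇T(x) := ∏_{k} deriv s_{k,x} (x_k), where the derivative exists for Lebesgue-almost every x. Then for every Lebesgue-integrable function φ : ℝⁿ → ℝ, ∫ φ(y) dy = ∫ φ(T(x)) · det∇T(x) dx. In particular, for any probability density ρ on ℝⁿ, the pullback of the measure volume.withDensity ρ under T (i.e., its pushforward by T⁻¹) is absolutely continuous with respect to Lebesgue measure, with density x ↦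 ρ(T(x)) · det∇T(x) almost everywhere. -/
open MeasureTheory

def LowerTriangular {n : ℕ} (T : (Fin n → ℝ) → (Fin n → ℝ)) : Prop :=
  ∀ (k : Fin n) (x y : Fin n → ℝ), (∀ j : Fin n, j ≤ k → x j = y j) → T x k = T y k

/-!
Split off the last coordinate: `T (x', a) = (S x', g_{x'} a)`, where `S` is again lower
triangular and `g_{x'}` is the last diagonal section, so that
`det∇T (x', a) = det∇S (x') · g_{x'}'(a)`. In dimension one, the Stieltjes measure of an
increasing homeomorphism `g` is the image of Lebesgue measure under `g⁻¹`; condition (N) makes it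
absolutely continuous, hence its density is `g'` a.e., i.e. `g` pushes `g'(t) dt` to `dt`.
Fubini and induction on the dimension then give `∫ F (T x) det∇T(x) dx = ∫ F`.
`det∇T` is measurable because, for continuous sections, differentiability is a Cauchy criterion
on difference quotients with rational increments, a countable condition.
-/

open Set Filter Topology Function

def RatSlopeCauchy (f : ℝ → ℝ) (t : ℝ) : Prop :=
  ∀ ε : ℚ, 0 < ε → ∃ δ : ℚ, 0 < δ ∧ ∀ q q' : ℚ, q ≠ 0 → q' ≠ 0 → |(q : ℝ)| < δ → |(q' : ℝ)| < δ →
    |(f (t + q) - f t) / q - (f (t + q') - f t) / q'| ≤ ε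

theorem differentiableAt_iff_cauchy_map_slope {f : ℝ → ℝ} {t : ℝ} :
    DifferentiableAt ℝ f t ↔ Cauchy (map (fun s => (f (t + s) - f t) / s) (𝓝[≠] 0)) := by
  simp_rw [cauchy_map_iff_exists_tendsto, div_eq_inv_mul, ← smul_eq_mul,
    ← hasDerivAt_iff_tendsto_slope_zero]
  exact ⟨fun h => ⟨_, h.hasDerivAt⟩, fun ⟨_, h⟩ => h.differentiableAt⟩

theorem DifferentiableAt.ratSlopeCauchy {f : ℝ → ℝ} {t : ℝ} (hf : DifferentiableAt ℝ f t) :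
    RatSlopeCauchy f t := by
  intro ε hε
  obtain ⟨-, hcauchy⟩ := Metric.cauchy_iff.1 (differentiableAt_iff_cauchy_map_slope.1 hf)
  obtain ⟨S, hS, hSdist⟩ := hcauchy ε (by exact_mod_cast hε)
  obtain ⟨r, hr, hball⟩ := Metric.mem_nhdsWithin_iff.1 (mem_map.1 hS)
  obtain ⟨δ, hδ, hδr⟩ := exists_rat_btwn hr
  have hmem : ∀ q : ℚ, q ≠ 0 → |(q : ℝ)| < δ → (q : ℝ) ∈ Metric.ball 0 r ∩ {0}ᶜ := fun q hq hqδ =>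
    ⟨by rw [mem_ball_zero_iff, Real.norm_eq_abs]; exact hqδ.trans hδr, by simpa using hq⟩
  exact ⟨δ, by exact_mod_cast hδ, fun q q' hq hq' hqδ hq'δ =>
    (hSdist _ (hball (hmem q hq hqδ)) _ (hball (hmem q' hq' hq'δ))).le⟩

theorem Continuous.differentiableAt_of_ratSlopeCauchy {f : ℝ → ℝ} {t : ℝ} (hf : Continuous f)
    (h : RatSlopeCauchy f t) : DifferentiableAt ℝ f t := by
  set F : ℝ → ℝ := fun s => (f (t + s) - f t) / s
  refine differentiableAt_iff_cauchy_map_slope.2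
    (Metric.cauchy_iff.2 ⟨inferInstance, fun ε hε => ?_⟩)
  obtain ⟨ε', hε', hε'ε⟩ := exists_rat_btwn hε
  obtain ⟨δ, hδ, hδF⟩ := h ε' (by exact_mod_cast hε')
  set U : Set ℝ := {s | s ≠ 0 ∧ |s| < δ}
  have hU : IsOpen U := isOpen_compl_singleton.inter (isOpen_lt continuous_abs continuous_const)
  -- the rational bound extends to real increments by continuity of the difference quotient
  have hbound : ∀ p ∈ U ×ˢ U, |F p.1 - F p.2| ≤ ε' := by
    intro p hp
    have hdense : DenseRange fun q : ℚ × ℚ => ((q.1 : ℝ), (q.2 : ℝ)) :=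
      Rat.denseRange_cast.prodMap Rat.denseRange_cast
    have hFcont : ∀ s ∈ U, ContinuousAt F s := fun s hs =>
      ((hf.comp (continuous_const.add continuous_id)).sub continuous_const).continuousAt.div
        continuousAt_id hs.1
    refine ContinuousWithinAt.closure_le (hdense.open_subset_closure_inter (hU.prod hU) hp)
      ((((hFcont _ hp.1).comp continuousAt_fst).sub
        ((hFcont _ hp.2).comp continuousAt_snd)).abs.continuousWithinAt)
      continuousWithinAt_const ?_
    rintro _ ⟨⟨hq, hq'⟩, ⟨q, q'⟩, rfl⟩
    exact hδF q q' (by simpa using hq.1) (by simpa using hq'.1) hq.2 hq'.2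
  refine ⟨F '' U, image_mem_map (mem_nhdsWithin.2 ⟨Metric.ball 0 δ, Metric.isOpen_ball,
    Metric.mem_ball_self (by exact_mod_cast hδ), fun s hs => ⟨hs.2, by simpa using hs.1⟩⟩), ?_⟩
  rintro _ ⟨s, hs, rfl⟩ _ ⟨s', hs', rfl⟩
  exact (hbound (s, s') ⟨hs, hs'⟩).trans_lt hε'ε

theorem Continuous.differentiableAt_iff_ratSlopeCauchy {f : ℝ → ℝ} {t : ℝ} (hf : Continuous f) :
    DifferentiableAt ℝ f t ↔ RatSlopeCauchy f t :=
  ⟨DifferentiableAt.ratSlopeCauchy, hf.differentiableAt_of_ratSlopeCauchy⟩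

section DerivParam

variable {α : Type*} [MeasurableSpace α] {g : α → ℝ → ℝ} {p : α → ℝ}

theorem measurable_diffQuot_param (hg : Measurable (uncurry g)) (hp : Measurable p) (s : ℝ) :
    Measurable fun a => (g a (p a + s) - g a (p a)) / s :=
  ((hg.comp (measurable_id.prodMk (hp.add_const s))).sub
    (hg.comp (measurable_id.prodMk hp))).div_const s

theorem measurableSet_differentiableAt_param (hg : Measurable (uncurry g)) (hp : Measurable p)
    (hgc : ∀ a, Continuous (g a)) : MeasurableSet {a | DifferentiableAt ℝ (g a) (p a)} := by
  rw [show {a | DifferentiableAt ℝ (g a) (p a)} = {a | RatSlopeCauchy (g a) (p a)} from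
    Set.ext fun a => (hgc a).differentiableAt_iff_ratSlopeCauchy]
  refine measurableSet_setOfPred.2 (Measurable.forall fun ε => measurable_const.imp <|
    Measurable.exists fun δ => measurable_const.and <| Measurable.forall fun q =>
    Measurable.forall fun q' => measurable_const.imp <| measurable_const.imp <|
    measurable_const.imp <| measurable_const.imp ?_)
  exact measurableSet_setOfPred.1 (measurableSet_le
    ((measurable_diffQuot_param hg hp q).sub (measurable_diffQuot_param hg hp q')).abs
    measurable_const)

theorem measurable_deriv_param (hg : Measurable (uncurry g)) (hp : Measurable p)
    (hgc : ∀ a, Continuous (g a)) : Measurable fun a => deriv (g a) (p a) := by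
  have hseq : Tendsto (fun m : ℕ => 1 / ((m : ℝ) + 1)) atTop (𝓝[≠] 0) :=
    tendsto_nhdsWithin_iff.2 ⟨tendsto_one_div_add_atTop_nhds_zero_nat,
      Eventually.of_forall fun m => by simp only [mem_compl_iff, mem_singleton_iff]; positivity⟩
  refine measurable_of_tendsto_metrizable (fun m : ℕ => (measurable_diffQuot_param hg hp
    (1 / ((m : ℝ) + 1))).indicator (measurableSet_differentiableAt_param hg hp hgc))
    (tendsto_pi_nhds.2 fun a => ?_)
  by_cases ha : DifferentiableAt ℝ (g a) (p a)
  · simp only [indicator_of_mem (show a ∈ {a | DifferentiableAt ℝ (g a) (p a)} from ha)]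
    convert (hasDerivAt_iff_tendsto_slope_zero.1 ha.hasDerivAt).comp hseq using 2
    simp [div_eq_inv_mul]
  · simp only [indicator_of_notMem (show a ∉ {a | DifferentiableAt ℝ (g a) (p a)} from ha),
      deriv_zero_of_not_differentiableAt ha]
    exact tendsto_const_nhds

end DerivParam

structure IsLuzinIncreasing (g : ℝ → ℝ) : Prop where
  strictMono : StrictMono g
  surjective : Surjective g
  luzinN : ∀ N : Set ℝ, volume N = 0 → volume (g '' N) = 0

namespace IsLuzinIncreasing

variable {g : ℝ → ℝ}

theorem continuous (hg : IsLuzinIncreasing g) : Continuous g :=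
  hg.strictMono.monotone.continuous_of_surjective hg.surjective

theorem map_withDensity_deriv (hg : IsLuzinIncreasing g) :
    Measure.map g (volume.withDensity fun t => ENNReal.ofReal (deriv g t)) = volume := by
  set e : ℝ ≃o ℝ := hg.strictMono.orderIsoOfSurjective g hg.surjective
  have he : ⇑e = g := rfl
  have hinv : Continuous e.symm := e.symm.continuous
  have hpre : ∀ s : Set ℝ, e.symm ⁻¹' s = g '' s := fun s => by
    rw [← he, e.image_eq_preimage_symm]
  set f : StieltjesFunction ℝ :=
    ⟨g, hg.strictMono.monotone, fun t => hg.continuous.continuousAt.continuousWithinAt⟩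
  have hf : f.measure = Measure.map e.symm volume := by
    refine Measure.ext_of_Ioc _ _ fun a b _ => ?_
    rw [Measure.map_apply hinv.measurable measurableSet_Ioc, hpre, ← he, e.image_Ioc,
      Real.volume_Ioc, f.measure_Ioc]
    rfl
  have hac : f.measure ≪ volume := Measure.AbsolutelyContinuous.mk fun s hs hs0 => by
    rw [hf, Measure.map_apply hinv.measurable hs, hpre]
    exact hg.luzinN s hs0
  have hdens : volume.withDensity (fun t => ENNReal.ofReal (deriv g t)) = f.measure := by
    rw [← Measure.withDensity_rnDeriv_eq f.measure volume hac]
    refine withDensity_congr_ae ?_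
    filter_upwards [f.ae_hasDerivAt, Measure.rnDeriv_lt_top f.measure volume] with t ht hlt
    rw [ht.deriv, ENNReal.ofReal_toReal hlt.ne]
  rw [hdens, hf, Measure.map_map hg.continuous.measurable hinv.measurable, ← he,
    show ⇑e ∘ ⇑e.symm = id from funext e.apply_symm_apply, Measure.map_id]

theorem lintegral_comp_mul_deriv (hg : IsLuzinIncreasing g) {F : ℝ → ENNReal}
    (hF : Measurable F) : ∫⁻ t, F (g t) * ENNReal.ofReal (deriv g t) = ∫⁻ s, F s := by
  conv_rhs => rw [← hg.map_withDensity_deriv]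
  rw [lintegral_map hF hg.continuous.measurable, lintegral_withDensity_eq_lintegral_mul _
    (measurable_deriv g).ennreal_ofReal (g := fun t => F (g t)) (hF.comp hg.continuous.measurable)]
  simp only [Pi.mul_apply, mul_comm]

end IsLuzinIncreasing

section Fubini
variable {α : Type*} {m : ℕ}

theorem piFinSuccAbove_last_symm_apply [MeasurableSpace α] (a : α) (x' : Fin m → α) :
    (MeasurableEquiv.piFinSuccAbove (fun _ => α) (Fin.last m)).symm (a, x') = Fin.snoc x' a := by
  simp [MeasurableEquiv.piFinSuccAbove_symm_apply, Fin.insertNthEquiv, Fin.insertNth_last']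

theorem measurable_uncurry_snoc [MeasurableSpace α] :
    Measurable fun p : (Fin m → α) × α => (Fin.snoc p.1 p.2 : Fin (m + 1) → α) := by
  convert (MeasurableEquiv.piFinSuccAbove (fun _ => α) (Fin.last m)).symm.measurable.comp
    measurable_swap using 1
  funext p
  exact (piFinSuccAbove_last_symm_apply p.2 p.1).symm

theorem lintegral_fin_snoc [MeasureSpace α] [SigmaFinite (volume : Measure α)]
    {f : (Fin (m + 1) → α) → ENNReal} (hf : Measurable f) :
    ∫⁻ x, f x = ∫⁻ x', ∫⁻ a, f (Fin.snoc x' a) := by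
  set e := MeasurableEquiv.piFinSuccAbove (fun _ : Fin (m + 1) => α) (Fin.last m)
  have he : MeasurePreserving e.symm volume volume :=
    (volume_preserving_piFinSuccAbove (fun _ : Fin (m + 1) => α) (Fin.last m)).symm e
  rw [← he.lintegral_comp hf, Measure.volume_eq_prod,
    lintegral_prod_symm (fun z => f (e.symm z)) (hf.comp he.measurable).aemeasurable]
  simp only [e, piFinSuccAbove_last_symm_apply]

end Fubini

section Triangular
variable {n m : ℕ}

def diagSection (T : (Fin n → ℝ) → (Fin n → ℝ)) (k : Fin n) (x : Fin n → ℝ) : ℝ → ℝ :=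
  fun t => T (update x k t) k

noncomputable def diagJacobian (T : (Fin n → ℝ) → (Fin n → ℝ)) (x : Fin n → ℝ) : ℝ :=
  ∏ k, deriv (diagSection T k x) (x k)

/-- For lower triangular `T` the first `m` components ignore the last coordinate, so setting it
to `0` loses nothing (see `LowerTriangular.apply_snoc`). -/
def initMap (T : (Fin (m + 1) → ℝ) → (Fin (m + 1) → ℝ)) (x' : Fin m → ℝ) : Fin m → ℝ :=
  fun k => T (Fin.snoc x' 0) k.castSucc

def lastSection (T : (Fin (m + 1) → ℝ) → (Fin (m + 1) → ℝ)) (x' : Fin m → ℝ) : ℝ → ℝ :=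
  fun t => T (Fin.snoc x' t) (Fin.last m)

theorem diagSection_last_snoc (T : (Fin (m + 1) → ℝ) → (Fin (m + 1) → ℝ)) (x' : Fin m → ℝ)
    (a : ℝ) : diagSection T (Fin.last m) (Fin.snoc x' a) = lastSection T x' := by
  ext t
  simp only [diagSection, lastSection, Fin.update_snoc_last]

namespace LowerTriangular

variable {T : (Fin (m + 1) → ℝ) → (Fin (m + 1) → ℝ)}

theorem apply_castSucc_eq (hT : LowerTriangular T) {k : Fin m} {x y : Fin (m + 1) → ℝ}
    (h : ∀ i ≤ k, x i.castSucc = y i.castSucc) : T x k.castSucc = T y k.castSucc :=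
  hT _ x y fun j hj => by
    have hjm : (j : ℕ) < m := lt_of_le_of_lt hj k.isLt
    simpa using h (j.castLT hjm) (Fin.le_def.2 hj)

theorem apply_snoc_castSucc (hT : LowerTriangular T) (x' : Fin m → ℝ) (a : ℝ) (k : Fin m) :
    T (Fin.snoc x' a) k.castSucc = initMap T x' k :=
  hT.apply_castSucc_eq fun i _ => by simp only [Fin.snoc_castSucc]

theorem apply_snoc (hT : LowerTriangular T) (x' : Fin m → ℝ) (a : ℝ) :
    T (Fin.snoc x' a) = Fin.snoc (initMap T x') (lastSection T x' a) := by
  ext j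
  induction j using Fin.lastCases with
  | last => simp only [Fin.snoc_last, lastSection]
  | cast k => rw [Fin.snoc_castSucc, hT.apply_snoc_castSucc]

theorem diagSection_castSucc (hT : LowerTriangular T) (x' : Fin m → ℝ) (a : ℝ) (k : Fin m) :
    diagSection T k.castSucc (Fin.snoc x' a) = diagSection (initMap T) k x' := by
  ext t
  rw [diagSection, ← Fin.snoc_update, hT.apply_snoc_castSucc]
  rfl

theorem initMap (hT : LowerTriangular T) : LowerTriangular (_root_.initMap T) :=
  fun _ x y hxy => hT.apply_castSucc_eq fun i hi => by
    simpa only [Fin.snoc_castSucc] using hxy i hi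

theorem diagJacobian_snoc (hT : LowerTriangular T) (x' : Fin m → ℝ) (a : ℝ) :
    diagJacobian T (Fin.snoc x' a) =
      diagJacobian (_root_.initMap T) x' * deriv (lastSection T x') a := by
  simp only [diagJacobian, Fin.prod_univ_castSucc, hT.diagSection_castSucc, Fin.snoc_castSucc,
    diagSection_last_snoc, Fin.snoc_last]

end LowerTriangular

theorem Measurable.initMap {T : (Fin (m + 1) → ℝ) → (Fin (m + 1) → ℝ)} (hT : Measurable T) :
    Measurable (initMap T) :=
  measurable_pi_lambda _ fun k => (measurable_pi_apply k.castSucc).comp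
    (hT.comp (measurable_uncurry_snoc.comp (measurable_id.prodMk measurable_const)))

end Triangular

section ChangeOfVariables

variable {n : ℕ} {T : (Fin n → ℝ) → (Fin n → ℝ)}

theorem diagJacobian_nonneg (hmono : ∀ k x, Monotone (diagSection T k x)) (x : Fin n → ℝ) :
    0 ≤ diagJacobian T x :=
  Finset.prod_nonneg fun k _ => (hmono k x).deriv_nonneg

theorem measurable_diagJacobian (hT : Measurable T)
    (hcont : ∀ k x, Continuous (diagSection T k x)) : Measurable (diagJacobian T) :=
  Finset.measurable_prod _ fun k _ => measurable_deriv_param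
    ((measurable_pi_apply k).comp (hT.comp measurable_update')) (measurable_pi_apply k) (hcont k)

theorem lintegral_comp_mul_diagJacobian (hT : Measurable T) (htri : LowerTriangular T)
    (hsec : ∀ k x, IsLuzinIncreasing (diagSection T k x)) {F : (Fin n → ℝ) → ENNReal}
    (hF : Measurable F) :
    ∫⁻ x, F (T x) * ENNReal.ofReal (diagJacobian T x) = ∫⁻ y, F y := by
  induction n with
  | zero =>
    have hT : ∀ x, T x = x := fun x => Subsingleton.elim _ _
    simp [diagJacobian, hT]
  | succ m ih =>
    have hsecS : ∀ k x', IsLuzinIncreasing (diagSection (initMap T) k x') := fun k x' => by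
      simpa only [htri.diagSection_castSucc] using hsec k.castSucc (Fin.snoc x' 0)
    have hlast : ∀ x', IsLuzinIncreasing (lastSection T x') := fun x' => by
      simpa only [diagSection_last_snoc] using hsec (Fin.last m) (Fin.snoc x' 0)
    have hJS : ∀ x', 0 ≤ diagJacobian (initMap T) x' :=
      diagJacobian_nonneg fun k x' => (hsecS k x').strictMono.monotone
    have hsnocF : ∀ y, Measurable fun s => F (Fin.snoc y s) := fun y =>
      hF.comp (measurable_uncurry_snoc.comp (measurable_const.prodMk measurable_id))
    calc ∫⁻ x, F (T x) * ENNReal.ofReal (diagJacobian T x)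
        = ∫⁻ x', ∫⁻ a, F (T (Fin.snoc x' a)) * ENNReal.ofReal (diagJacobian T (Fin.snoc x' a)) :=
          lintegral_fin_snoc ((hF.comp hT).mul (measurable_diagJacobian hT
            fun k x => (hsec k x).continuous).ennreal_ofReal)
      _ = ∫⁻ x', (∫⁻ a, F (Fin.snoc (initMap T x') (lastSection T x' a)) *
            ENNReal.ofReal (deriv (lastSection T x') a)) *
            ENNReal.ofReal (diagJacobian (initMap T) x') := by
          refine lintegral_congr fun x' => ?_
          rw [← lintegral_mul_const' _ _ ENNReal.ofReal_ne_top]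
          refine lintegral_congr fun a => ?_
          rw [htri.apply_snoc, htri.diagJacobian_snoc, ENNReal.ofReal_mul (hJS x')]
          ring
      _ = ∫⁻ x', (∫⁻ s, F (Fin.snoc (initMap T x') s)) *
            ENNReal.ofReal (diagJacobian (initMap T) x') := by
          simp only [fun x' => (hlast x').lintegral_comp_mul_deriv (hsnocF (initMap T x'))]
      _ = ∫⁻ y, ∫⁻ s, F (Fin.snoc y s) :=
          ih hT.initMap htri.initMap hsecS
            (hF.comp measurable_uncurry_snoc).lintegral_prod_right'
      _ = ∫⁻ y, F y := (lintegral_fin_snoc hF).symm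

theorem map_withDensity_comp_mul_diagJacobian (hT : Measurable T) (htri : LowerTriangular T)
    (hsec : ∀ k x, IsLuzinIncreasing (diagSection T k x)) {f : (Fin n → ℝ) → ENNReal}
    (hf : Measurable f) :
    Measure.map T (volume.withDensity fun x => f (T x) * ENNReal.ofReal (diagJacobian T x)) =
      volume.withDensity f := by
  have hdens : Measurable fun x => f (T x) * ENNReal.ofReal (diagJacobian T x) :=
    (hf.comp hT).mul (measurable_diagJacobian hT fun k x => (hsec k x).continuous).ennreal_ofReal
  refine Measure.ext_of_lintegral _ fun F hF => ?_
  rw [lintegral_map hF hT,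
    lintegral_withDensity_eq_lintegral_mul _ hdens (g := fun x => F (T x)) (hF.comp hT),
    lintegral_withDensity_eq_lintegral_mul _ hf hF]
  simpa only [Pi.mul_apply, mul_comm, mul_left_comm, mul_assoc] using
    lintegral_comp_mul_diagJacobian hT htri hsec (hf.mul hF)

theorem integral_comp_smul_diagJacobian {E : Type*} [NormedAddCommGroup E] [NormedSpace ℝ E]
    (hT : Measurable T) (htri : LowerTriangular T)
    (hsec : ∀ k x, IsLuzinIncreasing (diagSection T k x)) {φ : (Fin n → ℝ) → E}
    (hφ : AEStronglyMeasurable φ volume) :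
    ∫ y, φ y = ∫ x, diagJacobian T x • φ (T x) := by
  have hmap := map_withDensity_comp_mul_diagJacobian hT htri hsec measurable_one
  simp only [Pi.one_apply, one_mul, withDensity_one] at hmap
  rw [← hmap] at hφ
  nth_rw 1 [← hmap]
  rw [integral_map hT.aemeasurable hφ, integral_withDensity_eq_integral_toReal_smul
    (measurable_diagJacobian hT fun k x => (hsec k x).continuous).ennreal_ofReal
    (ae_of_all _ fun _ => ENNReal.ofReal_lt_top)]
  simp only [ENNReal.toReal_ofReal
    (diagJacobian_nonneg (fun k x => (hsec k x).strictMono.monotone) _)]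

end ChangeOfVariables

theorem MeasurableEmbedding.measurable_invFun_of_surjective {α β : Type*} [MeasurableSpace α]
    [MeasurableSpace β] [Nonempty α] {f : α → β} (hf : MeasurableEmbedding f)
    (hsurj : Surjective f) : Measurable (invFun f) := fun s hs => by
  rw [← image_eq_preimage_of_inverse (Function.leftInverse_invFun hf.injective)
    (rightInverse_invFun hsurj)]
  exact hf.measurableSet_image' hs

theorem triangular_change_of_variables_general
    (n : ℕ)
    (T : (Fin n → ℝ) → (Fin n → ℝ))
    (hTmeas : Measurable T) (hTbij : Function.Bijective T)
    (hTtri : LowerTriangular T)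
    (hmono : ∀ (k : Fin n) (x : Fin n → ℝ),
      StrictMono (fun t => T (Function.update x k t) k))
    (hsurj : ∀ (k : Fin n) (x : Fin n → ℝ),
      Function.Surjective (fun t => T (Function.update x k t) k))
    (hluzin : ∀ (k : Fin n) (x : Fin n → ℝ) (N : Set ℝ),
      volume N = 0 → volume ((fun t => T (Function.update x k t) k) '' N) = 0) :
    (∀ φ : (Fin n → ℝ) → ℝ, Integrable φ →
      ∫ y, φ y =
        ∫ x, φ (T x) * ∏ k : Fin n, deriv (fun t => T (Function.update x k t) k) (x k)) ∧
    (∀ ρ : (Fin n → ℝ) → ℝ, Measurable ρ → (∀ x, 0 ≤ ρ x) → (∫ x, ρ x) = 1 →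
      Measure.map (Function.invFun T)
          ((volume : Measure (Fin n → ℝ)).withDensity (fun x => ENNReal.ofReal (ρ x))) =
        (volume : Measure (Fin n → ℝ)).withDensity
          (fun x => ENNReal.ofReal
            (ρ (T x) * ∏ k : Fin n, deriv (fun t => T (Function.update x k t) k) (x k)))) := by
  have hsec : ∀ k x, IsLuzinIncreasing (diagSection T k x) :=
    fun k x => ⟨hmono k x, hsurj k x, hluzin k x⟩
  have hJ : ∀ x, ∏ k, deriv (fun t => T (update x k t) k) (x k) = diagJacobian T x :=
    fun _ => rfl
  simp only [hJ]
  refine ⟨fun φ hφ => ?_, fun ρ hρ hρ0 _ => ?_⟩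
  · simpa only [smul_eq_mul, mul_comm] using
      integral_comp_smul_diagJacobian hTmeas hTtri hsec hφ.aestronglyMeasurable
  · have hinv := (hTmeas.measurableEmbedding hTbij.1).measurable_invFun_of_surjective hTbij.2
    rw [← map_withDensity_comp_mul_diagJacobian hTmeas hTtri hsec hρ.ennreal_ofReal,
      Measure.map_map hinv hTmeas, invFun_comp hTbij.1, Measure.map_id]
    simp only [ENNReal.ofReal_mul (hρ0 _)]

/-- **Change of variables for monotone triangular maps (Bogachev–Kolesnikov–Medvedev).**
Let `T` be a measurable lower triangular bijection of `ℝⁿ` whose diagonal sections are strictly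
increasing continuous bijections of `ℝ` satisfying Luzin's condition (N).  With
`det∇T(x) = ∏ₖ (d/dt) T(update x k t)ₖ |_{t = xₖ}` (defined a.e., with `deriv = 0` where the
derivative does not exist), every integrable `φ` satisfies
`∫ φ(y) dy = ∫ φ(T x) det∇T(x) dx`, and for every probability density `ρ` the pullback of
`volume.withDensity ρ` under `T` has Lebesgue density `x ↦ ρ(T x) · det∇T(x)`. -/
theorem triangular_change_of_variables
    (n : ℕ) (hn : 0 < n)
    (T : (Fin n → ℝ) → (Fin n → ℝ))
    (hTmeas : Measurable T) (hTbij : Function.Bijective T)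
    (hTtri : LowerTriangular T)
    (hmono : ∀ (k : Fin n) (x : Fin n → ℝ),
      StrictMono (fun t => T (Function.update x k t) k))
    (hcont : ∀ (k : Fin n) (x : Fin n → ℝ),
      Continuous (fun t => T (Function.update x k t) k))
    (hsurj : ∀ (k : Fin n) (x : Fin n → ℝ),
      Function.Surjective (fun t => T (Function.update x k t) k))
    (hluzin : ∀ (k : Fin n) (x : Fin n → ℝ) (N : Set ℝ),
      volume N = 0 → volume ((fun t => T (Function.update x k t) k) '' N) = 0) :
    (∀ φ : (Fin n → ℝ) → ℝ, Integrable φ →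
      ∫ y, φ y =
        ∫ x, φ (T x) * ∏ k : Fin n, deriv (fun t => T (Function.update x k t) k) (x k)) ∧
    (∀ ρ : (Fin n → ℝ) → ℝ, Measurable ρ → (∀ x, 0 ≤ ρ x) → (∫ x, ρ x) = 1 →
      Measure.map (Function.invFun T)
          ((volume : Measure (Fin n → ℝ)).withDensity (fun x => ENNReal.ofReal (ρ x))) =
        (volume : Measure (Fin n → ℝ)).withDensity
          (fun x => ENNReal.ofReal
            (ρ (T x) * ∏ k : Fin n, deriv (fun t => T (Function.update x k t) k) (x k)))) :=
  triangular_change_of_variables_general n T hTmeas hTbij hTtri hmono hsurj hluzin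
end

section
/- Let n ≥ 1, let f : ℝⁿ → ℝ be infinitely differentiable, and let i ≠ j be coordinates in {1,…,n} such that the mixed second partial derivative ∂_i ∂_j f vanishes identically on ℝⁿ. Then there exist infinitely differentiable functions g, h : ℝⁿ → ℝ with f = g + h, such that g does not depend on coordinate i and h does not depend on coordinate j (i.e., g(Function.update x i t) = g(x) and h(Function.update x j t) = h(x) for all x ∈ ℝⁿ and t ∈ ℝ). -/
/-- **Additive decomposition from a vanishing mixed partial derivative.**
If `f : ℝⁿ → ℝ` is smooth and the mixed second partial `∂_i ∂_j f` vanishes identically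
(for distinct coordinates `i ≠ j`), then `f = g + h` for smooth functions `g`, `h` where `g`
does not depend on coordinate `i` and `h` does not depend on coordinate `j`. -/
theorem exists_additive_decomposition_of_mixed_partial_eq_zero
    (n : ℕ) (hn : 0 < n) (i j : Fin n) (hij : i ≠ j)
    (f : (Fin n → ℝ) → ℝ) (hf : ContDiff ℝ (⊤ : ℕ∞) f)
    (hmix : ∀ x : Fin n → ℝ,
      fderiv ℝ (fun x => fderiv ℝ f x (Pi.single j 1)) x (Pi.single i 1) = 0) :
    ∃ g h : (Fin n → ℝ) → ℝ,
      ContDiff ℝ (⊤ : ℕ∞) g ∧ ContDiff ℝ (⊤ : ℕ∞) h ∧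
      (∀ x, f x = g x + h x) ∧
      (∀ (x : Fin n → ℝ) (t : ℝ), g (Function.update x i t) = g x) ∧
      (∀ (x : Fin n → ℝ) (t : ℝ), h (Function.update x j t) = h x) := by
  classical
  have hfd : Differentiable ℝ f := hf.differentiable (by simp)
  -- constancy along a direction from vanishing directional derivative
  have key : ∀ (F : (Fin n → ℝ) → ℝ), Differentiable ℝ F →
      ∀ (e : Fin n → ℝ), (∀ x, fderiv ℝ F x e = 0) →
      ∀ (x : Fin n → ℝ) (t : ℝ), F (x + t • e) = F x := by
    intro F hF e he x t
    have hψ : ∀ s : ℝ, HasDerivAt (fun s : ℝ => F (x + s • e)) 0 s := by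
      intro s
      have h1 : HasDerivAt (fun s : ℝ => x + s • e) e s := by
        simpa using ((hasDerivAt_id s).smul_const e).const_add x
      have h2 := (hF (x + s • e)).hasFDerivAt.comp_hasDerivAt s h1
      rw [he (x + s • e)] at h2
      exact h2
    have := is_const_of_deriv_eq_zero (f := fun s : ℝ => F (x + s • e))
      (fun s => (hψ s).differentiableAt) (fun s => (hψ s).deriv) t 0
    simpa using this
  -- update as translation
  have hupd : ∀ (x : Fin n → ℝ) (k : Fin n) (t : ℝ),
      Function.update x k t = x + (t - x k) • (Pi.single k 1 : Fin n → ℝ) := by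
    intro x k t; funext m
    rcases eq_or_ne m k with hm | hm
    · subst hm; simp
    · simp [Function.update_of_ne hm, Pi.single_apply, hm]
  -- the projection as a continuous linear map
  set P : (Fin n → ℝ) →L[ℝ] (Fin n → ℝ) :=
    ContinuousLinearMap.id ℝ (Fin n → ℝ) -
      (ContinuousLinearMap.proj i).smulRight (Pi.single i 1) with hPdef
  have hPx : ∀ x : Fin n → ℝ, P x = Function.update x i 0 := by
    intro x; funext m
    rcases eq_or_ne m i with hm | hm
    · subst hm; simp [hPdef]
    · simp [hPdef, Function.update_of_ne hm, Pi.single_apply, hm]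
  have hPej : P (Pi.single j 1) = Pi.single j 1 := by
    have : (Pi.single j 1 : Fin n → ℝ) i = 0 := Pi.single_eq_of_ne hij 1
    simp [hPdef, this]
  -- the directional derivative D = ∂_j f
  set D : (Fin n → ℝ) → ℝ := fun x => fderiv ℝ f x (Pi.single j 1) with hDdef
  have hDdiff : Differentiable ℝ D := by
    have h1 : ContDiff ℝ (⊤ : ℕ∞) (fderiv ℝ f) := hf.fderiv_right (m := (⊤ : ℕ∞)) (by simp)
    exact ((ContinuousLinearMap.apply ℝ ℝ
      ((Pi.single j 1 : Fin n → ℝ))).contDiff.comp h1).differentiable (by simp)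
  have hDconst : ∀ (x : Fin n → ℝ) (t : ℝ), D (x + t • (Pi.single i 1 : Fin n → ℝ)) = D x :=
    key D hDdiff _ hmix
  have hDP : ∀ x : Fin n → ℝ, D (P x) = D x := by
    intro x
    have := hDconst x (0 - x i)
    rw [hPx, hupd x i 0]
    exact this
  -- the decomposition
  refine ⟨fun x => f (P x), fun x => f x - f (P x),
    hf.comp P.contDiff, hf.sub (hf.comp P.contDiff), fun x => by ring, ?_, ?_⟩
  · intro x t
    show f (P (Function.update x i t)) = f (P x)
    rw [hPx, hPx, Function.update_idem]
  · -- h has vanishing j-derivative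
    have hgH : ∀ x : Fin n → ℝ,
        HasFDerivAt (fun x => f (P x)) ((fderiv ℝ f (P x)).comp P) x := fun x =>
      (hfd (P x)).hasFDerivAt.comp x P.hasFDerivAt
    have hhH : ∀ x : Fin n → ℝ,
        HasFDerivAt (fun x => f x - f (P x))
          (fderiv ℝ f x - (fderiv ℝ f (P x)).comp P) x := fun x =>
      (hfd x).hasFDerivAt.sub (hgH x)
    have hzero : ∀ x : Fin n → ℝ,
        fderiv ℝ (fun x => f x - f (P x)) x (Pi.single j 1) = 0 := by
      intro x
      rw [(hhH x).fderiv]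
      have : fderiv ℝ f (P x) (P (Pi.single j 1)) = D x := by
        rw [hPej]; exact hDP x
      simp only [ContinuousLinearMap.sub_apply, ContinuousLinearMap.comp_apply, this]
      simp [hDdef]
    intro x t
    have hdiff : Differentiable ℝ (fun x => f x - f (P x)) := fun x => (hhH x).differentiableAt
    have := key (fun x => f x - f (P x)) hdiff (Pi.single j 1) hzero x (t - x j)
    rw [hupd x j t]
    exact this
end

section
/- Let μ and ν be Borel probability measures on ℝ, each absolutely continuous with respect to Lebesgue measure with an almost-everywhere strictly positive density. If T₁, T₂ : ℝ → ℝ are monotone nondecreasing maps with Measure.map T₁ μ = ν and Measure.map T₂ μ = ν, then T₁ = T₂ μ-almost everywhere. -/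
open MeasureTheory Set

/-!
A monotone map `T` pushing an atomless `μ` forward to an atomless `ν` matches distribution
functions exactly: `T⁻¹(Iic (T x))` contains `Iic x` and `T⁻¹(Iio (T x))` lies in `Iio x`, so
`F_ν (T x) = F_μ x` for every `x`. When `ν` charges every nonempty interval, `F_ν` is strictly
increasing, so `T x` is determined by `x`; in particular two such maps agree everywhere.
-/

section MonotoneTransport

variable {α β : Type*}
  [LinearOrder α] [TopologicalSpace α] [OrderClosedTopology α] [MeasurableSpace α] [BorelSpace α]
  [LinearOrder β] [TopologicalSpace β] [OrderTopology β] [SecondCountableTopology β]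
  [MeasurableSpace β] [BorelSpace β]
  {μ : Measure α} {ν : Measure β} {T : α → β}

theorem measure_Iic_le_map_Iic_of_monotone (hT : Monotone T) (x : α) :
    μ (Iic x) ≤ μ.map T (Iic (T x)) := by
  rw [Measure.map_apply hT.measurable measurableSet_Iic]
  exact measure_mono fun _ hy => hT hy

theorem map_Iio_le_measure_Iio_of_monotone (hT : Monotone T) (x : α) :
    μ.map T (Iio (T x)) ≤ μ (Iio x) := by
  rw [Measure.map_apply hT.measurable measurableSet_Iio]
  exact measure_mono fun _ hy => hT.reflect_lt hy

theorem measure_Iic_apply_eq_of_monotone_map_eq [NullSingletonClass μ] [NullSingletonClass ν]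
    (hT : Monotone T) (hTμ : μ.map T = ν) (x : α) :
    ν (Iic (T x)) = μ (Iic x) := by
  refine le_antisymm ?_ (hTμ ▸ measure_Iic_le_map_Iic_of_monotone hT x)
  calc ν (Iic (T x)) = ν (Iio (T x)) := (measure_congr Iio_ae_eq_Iic).symm
    _ ≤ μ (Iio x) := hTμ ▸ map_Iio_le_measure_Iio_of_monotone hT x
    _ = μ (Iic x) := measure_congr Iio_ae_eq_Iic

end MonotoneTransport

theorem strictMono_measure_Iic {α : Type*} [LinearOrder α] [TopologicalSpace α]
    [OrderClosedTopology α] [MeasurableSpace α] [OpensMeasurableSpace α]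
    {ν : Measure α} [IsFiniteMeasure ν] (hν : ∀ a b, a < b → ν (Ioc a b) ≠ 0) :
    StrictMono fun x => ν (Iic x) := by
  intro a b hab
  calc ν (Iic a) < ν (Iic a) + ν (Ioc a b) :=
        ENNReal.lt_add_right (measure_ne_top ν _) (hν a b hab)
    _ = ν (Iic b) := by
      rw [← measure_union (Iic_disjoint_Ioc le_rfl) measurableSet_Ioc,
        Iic_union_Ioc_eq_Iic hab.le]

theorem measure_Ioc_ne_zero_of_absolutelyContinuous {ν : Measure ℝ} (hν : volume ≪ ν)
    {a b : ℝ} (hab : a < b) : ν (Ioc a b) ≠ 0 := fun h =>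
  hab.not_ge (by simpa using hν h)

theorem monotone_transport_unique_ae_general
    (μ ν : Measure ℝ) [IsProbabilityMeasure ν]
    (f g : ℝ → ℝ) (hgmeas : Measurable g)
    (hμd : μ = (volume : Measure ℝ).withDensity (fun t => ENNReal.ofReal (f t)))
    (hνd : ν = (volume : Measure ℝ).withDensity (fun t => ENNReal.ofReal (g t)))
    (hgpos : ∀ᵐ t ∂(volume : Measure ℝ), 0 < g t)
    (T₁ T₂ : ℝ → ℝ) (hT₁mono : Monotone T₁) (hT₂mono : Monotone T₂)
    (hT₁ : Measure.map T₁ μ = ν) (hT₂ : Measure.map T₂ μ = ν) :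
    T₁ =ᵐ[μ] T₂ := by
  -- after `subst`, atomlessness of both measures is the instance `nullSingletonClass_withDensity`
  subst hμd hνd
  have hν : volume ≪ volume.withDensity (fun t => ENNReal.ofReal (g t)) :=
    withDensity_absolutelyContinuous' hgmeas.ennreal_ofReal.aemeasurable
      (hgpos.mono fun _ ht => (ENNReal.ofReal_pos.2 ht).ne')
  have hF := strictMono_measure_Iic fun _ _ => measure_Ioc_ne_zero_of_absolutelyContinuous hν
  refine ae_of_all _ fun x => hF.injective ?_
  simp only [measure_Iic_apply_eq_of_monotone_map_eq hT₁mono hT₁,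
    measure_Iic_apply_eq_of_monotone_map_eq hT₂mono hT₂]

/-- **Uniqueness (up to null sets) of the monotone rearrangement on ℝ.**
If `μ, ν` are fully supported absolutely continuous Borel probability measures on `ℝ` and
`T₁, T₂` are monotone nondecreasing maps each pushing `μ` forward to `ν`, then `T₁ = T₂`
`μ`-almost everywhere. -/
theorem monotone_transport_unique_ae
    (μ ν : Measure ℝ) [IsProbabilityMeasure μ] [IsProbabilityMeasure ν]
    (f g : ℝ → ℝ) (hfmeas : Measurable f) (hgmeas : Measurable g)
    (hμd : μ = (volume : Measure ℝ).withDensity (fun t => ENNReal.ofReal (f t)))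
    (hνd : ν = (volume : Measure ℝ).withDensity (fun t => ENNReal.ofReal (g t)))
    (hfpos : ∀ᵐ t ∂(volume : Measure ℝ), 0 < f t)
    (hgpos : ∀ᵐ t ∂(volume : Measure ℝ), 0 < g t)
    (T₁ T₂ : ℝ → ℝ) (hT₁mono : Monotone T₁) (hT₂mono : Monotone T₂)
    (hT₁ : Measure.map T₁ μ = ν) (hT₂ : Measure.map T₂ μ = ν) :
    T₁ =ᵐ[μ] T₂ :=
  monotone_transport_unique_ae_general μ ν f g hgmeas hμd hνd hgpos T₁ T₂ hT₁mono hT₂mono hT₁ hT₂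
end
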